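/- arXiv:2310.07558 — 5 statements merged into one kernel-verified Lean document; each statement's English description precedes it below -/
import Mathlib

section
/- For every L > 0 and β > 0 there exist a constant M₂ > 0 and a function g : [0, 1] → [0, 1] such that: (i) g belongs to the Hölder class H(β, L) on [0, 1]; (ii) for every positive integer c there exist an index i ∈ {0, 1, …, 2^c − 1} and a polynomial q of degree at most w(β) that is an L²-projection of g onto Poly(w(β)) on V = [i/2^c, (i+1)/2^c], with sup_{p ∈ V} |q(p) − g(p)| ≥ M₂·2^{−cβ}; (iii) g attains its maximum over [0, 1] at the unique point 1/2; and (iv) g^{(k)}(0) = g^{(k)}(1) = 0 for every k ∈ {0, 1, …, w(β)}. -/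
open MeasureTheory Matrix Set

noncomputable def holderW (β : ℝ) : ℕ := ⌈β⌉₊ - 1

def HolderClass0 (β L : ℝ) (g : ℝ → ℝ) (J : Set ℝ) : Prop :=
  ContDiffOn ℝ (holderW β) g J ∧
  (∀ k : ℕ, k ≤ holderW β → ∀ p ∈ J, |iteratedDerivWithin k g J p| ≤ L) ∧
  ∀ p ∈ J, ∀ p' ∈ J,
    |iteratedDerivWithin (holderW β) g J p - iteratedDerivWithin (holderW β) g J p'|
      ≤ L * |p - p'| ^ (β - (holderW β : ℝ))

def HolderClass (β L : ℝ) (g : ℝ → ℝ) (J : Set ℝ) : Prop :=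
  if 1 ≤ β then HolderClass0 β L g J ∧ HolderClass0 1 L g J else HolderClass0 β L g J


/-- `q` is an L²-projection of `g` onto polynomials of degree at most `l` over `V`. -/
def IsL2Proj (l : ℕ) (g : ℝ → ℝ) (V : Set ℝ) (q : Polynomial ℝ) : Prop :=
  q.natDegree ≤ l ∧ ∀ r : Polynomial ℝ, r.natDegree ≤ l →
    (∫ u in V, (g u - q.eval u) ^ 2) ≤ ∫ u in V, (g u - r.eval u) ^ 2

open Polynomial Metric


/-- generic: a chain of derivatives gives smoothness on Icc 0 1 -/
lemma chain_contDiffOn (m : ℕ) (f : ℕ → ℝ → ℝ)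
    (hder : ∀ k < m, ∀ x ∈ Icc (0:ℝ) 1, HasDerivAt (f k) (f (k+1) x) x)
    (hcont : ContinuousOn (f m) (Icc (0:ℝ) 1)) :
    ContDiffOn ℝ m (f 0) (Icc (0:ℝ) 1) := by
  induction m generalizing f with
  | zero => exact contDiffOn_zero.mpr hcont
  | succ m ih =>
    have hcast : ((m+1 : ℕ) : WithTop ℕ∞) = (m : WithTop ℕ∞) + 1 := by push_cast; ring
    rw [hcast, contDiffOn_succ_iff_derivWithin (uniqueDiffOn_Icc one_pos)]
    refine ⟨fun x hx => ((hder 0 (Nat.succ_pos m) x hx).differentiableAt.differentiableWithinAt), ?_, ?_⟩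
    · intro h; exact absurd h (by simp)
    · have heq : EqOn (derivWithin (f 0) (Icc (0:ℝ) 1)) (f 1) (Icc (0:ℝ) 1) := by
        intro x hx
        exact ((hder 0 (Nat.succ_pos m) x hx).hasDerivWithinAt).derivWithin
          (uniqueDiffOn_Icc one_pos x hx)
      refine (ih (fun k => f (k+1)) (fun k hk x hx => hder (k+1) (by omega) x hx)
        (by simpa using hcont)).congr heq

lemma chain_iteratedDerivWithin (m : ℕ) (f : ℕ → ℝ → ℝ)
    (hder : ∀ k < m, ∀ x ∈ Icc (0:ℝ) 1, HasDerivAt (f k) (f (k+1) x) x) :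
    ∀ k ≤ m, ∀ x ∈ Icc (0:ℝ) 1, iteratedDerivWithin k (f 0) (Icc (0:ℝ) 1) x = f k x := by
  intro k
  induction k with
  | zero => intro _ x _; simp
  | succ k ih =>
    intro hk x hx
    rw [iteratedDerivWithin_succ]
    rw [derivWithin_congr (fun y hy => ih (by omega) y hy) (ih (by omega) x hx)]
    exact ((hder k (by omega) x hx).hasDerivWithinAt).derivWithin (uniqueDiffOn_Icc one_pos x hx)


lemma rpow_factor {γ x : ℝ} (hγ : 1 ≤ γ) (hx : 0 ≤ x) : x ^ γ = x ^ (γ - 1) * x := by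
  rcases eq_or_lt_of_le hx with h | h
  · rw [← h, Real.zero_rpow (by linarith), mul_zero]
  · rw [← Real.rpow_add_one (ne_of_gt h) (γ - 1)]; ring_nf

lemma rpow_abs_sub_le {α x y : ℝ} (hα0 : 0 < α) (hα1 : α ≤ 1) (hx : 0 ≤ x) (hy : 0 ≤ y) :
    |x ^ α - y ^ α| ≤ |x - y| ^ α := by
  wlog h : y ≤ x generalizing x y
  · rw [abs_sub_comm, abs_sub_comm x y]; exact this hy hx (le_of_not_ge h)
  have key : ∀ a b : ℝ, 0 ≤ a → 0 ≤ b → (a + b) ^ α ≤ a ^ α + b ^ α := by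
    intro a b ha hb
    have := NNReal.rpow_add_le_add_rpow a.toNNReal b.toNNReal hα0.le hα1
    have h1 : ((a.toNNReal + b.toNNReal : NNReal) : ℝ) = a + b := by
      simp [Real.coe_toNNReal _ ha, Real.coe_toNNReal _ hb]
    calc (a + b) ^ α = ((a.toNNReal + b.toNNReal : NNReal) : ℝ) ^ α := by rw [h1]
      _ = (((a.toNNReal + b.toNNReal) ^ α : NNReal) : ℝ) := by rw [NNReal.coe_rpow]
      _ ≤ (((a.toNNReal) ^ α + (b.toNNReal) ^ α : NNReal) : ℝ) := by exact_mod_cast this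
      _ = a ^ α + b ^ α := by push_cast [NNReal.coe_rpow, Real.coe_toNNReal _ ha, Real.coe_toNNReal _ hb]; ring
  have h1 : x ^ α - y ^ α ≤ (x - y) ^ α := by
    have := key (x - y) y (by linarith) hy
    simp only [sub_add_cancel] at this; linarith
  have h2 : 0 ≤ x ^ α - y ^ α := by
    have := Real.rpow_le_rpow hy h hα0.le; linarith
  rw [abs_of_nonneg h2, abs_of_nonneg (by linarith : (0:ℝ) ≤ x - y)]
  exact h1

lemma abs_le_rpow_abs {x α : ℝ} (hx : |x| ≤ 1) (hα0 : 0 < α) (hα1 : α ≤ 1) : |x| ≤ |x| ^ α := by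
  rcases eq_or_lt_of_le (abs_nonneg x) with h | h
  · rw [← h, Real.zero_rpow (ne_of_gt hα0)]
  · calc |x| = |x| ^ (1:ℝ) := (Real.rpow_one _).symm
      _ ≤ |x| ^ α := Real.rpow_le_rpow_of_exponent_ge h hx hα1

noncomputable def Pa (β : ℝ) : ℕ → Polynomial ℝ
  | 0 => 1
  | (k+1) => Polynomial.C (β - k) * (1 - 2 * Polynomial.X) * Pa β k
      + (Polynomial.X - Polynomial.X ^ 2) * derivative (Pa β k)

noncomputable def Da (β K : ℝ) (k : ℕ) (x : ℝ) : ℝ :=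
  K * (x ^ (β - k) * ((1 - x) ^ (β - k) * (Pa β k).eval x))

lemma hasDerivAt_Da {β K : ℝ} {k : ℕ} (hk : (k:ℝ) + 1 ≤ β) {x : ℝ} (hx0 : 0 ≤ x) (hx1 : x ≤ 1) :
    HasDerivAt (Da β K k) (Da β K (k+1) x) x := by
  set γ := β - (k:ℝ) with hγdef
  have hγ : 1 ≤ γ := by rw [hγdef]; linarith
  have hA : HasDerivAt (fun x : ℝ => x ^ γ) (γ * x ^ (γ-1)) x :=
    Real.hasDerivAt_rpow_const (Or.inr hγ)
  have hsub : HasDerivAt (fun x : ℝ => 1 - x) (-1) x := by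
    simpa using (hasDerivAt_id x).const_sub 1
  have hB : HasDerivAt (fun x : ℝ => (1-x) ^ γ) (γ * (1-x) ^ (γ-1) * (-1)) x := by
    exact (Real.hasDerivAt_rpow_const (Or.inr hγ)).comp x hsub
  have hC : HasDerivAt (fun x : ℝ => (Pa β k).eval x) ((Pa β k).derivative.eval x) x :=
    (Pa β k).hasDerivAt x
  have hP := ((hA.mul (hB.mul hC)).const_mul K)
  have e1 : x ^ γ = x ^ (γ-1) * x := rpow_factor hγ hx0
  have e2 : (1-x) ^ γ = (1-x) ^ (γ-1) * (1-x) := rpow_factor hγ (by linarith)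
  convert hP using 1
  · rfl
  · rfl
  · rfl
  simp only [Da, Pa, eval_add, eval_mul, eval_C, eval_sub, eval_one, eval_pow, eval_X,
      eval_ofNat, eval_mul, Nat.cast_add, Nat.cast_one, Pi.mul_apply]
  have h3 : β - ((k:ℝ) + 1) = γ - 1 := by rw [hγdef]; ring
  rw [h3, e1, e2]
  ring


noncomputable def pB (p : Polynomial ℝ) : ℝ := ∑ i ∈ Finset.range (p.natDegree + 1), |p.coeff i|

lemma pB_nonneg (p : Polynomial ℝ) : 0 ≤ pB p :=
  Finset.sum_nonneg fun _ _ => abs_nonneg _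

lemma abs_eval_le (p : Polynomial ℝ) {x : ℝ} (h0 : 0 ≤ x) (h1 : x ≤ 1) : |p.eval x| ≤ pB p := by
  rw [Polynomial.eval_eq_sum_range]
  refine (Finset.abs_sum_le_sum_abs _ _).trans ?_
  refine Finset.sum_le_sum fun i _ => ?_
  rw [abs_mul]
  calc |p.coeff i| * |x ^ i| ≤ |p.coeff i| * 1 := by
        refine mul_le_mul_of_nonneg_left ?_ (abs_nonneg _)
        rw [abs_pow]; exact pow_le_one₀ (abs_nonneg x) (by rwa [abs_of_nonneg h0])
    _ = |p.coeff i| := mul_one _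

lemma eval_lip (p : Polynomial ℝ) {x y : ℝ} (hx : x ∈ Icc (0:ℝ) 1) (hy : y ∈ Icc (0:ℝ) 1) :
    |p.eval y - p.eval x| ≤ pB (derivative p) * |y - x| := by
  have := Convex.norm_image_sub_le_of_norm_hasDerivWithin_le
    (f := fun t => p.eval t) (f' := fun t => (derivative p).eval t)
    (fun t ht => (p.hasDerivAt t).hasDerivWithinAt)
    (C := pB (derivative p))
    (fun t ht => by rw [Real.norm_eq_abs]; exact abs_eval_le _ ht.1 ht.2)
    (convex_Icc 0 1) hx hy
  simpa [Real.norm_eq_abs] using this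

lemma continuous_Da {β K : ℝ} {k : ℕ} (hk : 0 ≤ β - k) : Continuous (Da β K k) := by
  unfold Da
  refine continuous_const.mul (((Real.continuous_rpow_const hk)).mul
    (((Real.continuous_rpow_const hk).comp (continuous_const.sub continuous_id)).mul
    (Pa β k).continuous_aeval))

lemma abs_Da_le {β K : ℝ} {k : ℕ} (hk : 0 ≤ β - k) {x : ℝ} (h0 : 0 ≤ x) (h1 : x ≤ 1) :
    |Da β K k x| ≤ |K| * pB (Pa β k) := by
  unfold Da
  rw [abs_mul, abs_mul, abs_mul]
  have e1 : |x ^ (β - k)| ≤ 1 := by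
    rw [abs_of_nonneg (Real.rpow_nonneg h0 _)]; exact Real.rpow_le_one h0 h1 hk
  have e2 : |(1 - x) ^ (β - k)| ≤ 1 := by
    rw [abs_of_nonneg (Real.rpow_nonneg (by linarith) _)]
    exact Real.rpow_le_one (by linarith) (by linarith) hk
  have e3 : |(Pa β k).eval x| ≤ pB (Pa β k) := abs_eval_le _ h0 h1
  calc |K| * (|x ^ (β - k)| * (|(1-x) ^ (β - k)| * |(Pa β k).eval x|))
      ≤ |K| * (1 * (1 * pB (Pa β k))) := by
        refine mul_le_mul_of_nonneg_left ?_ (abs_nonneg K)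
        refine mul_le_mul e1 (mul_le_mul e2 e3 (abs_nonneg _) (by linarith [e2, abs_nonneg ((1-x) ^ (β - k))])) ?_ ?_
        · positivity
        · norm_num
    _ = |K| * pB (Pa β k) := by ring

lemma holder_Da {β K : ℝ} {k : ℕ} (hα0 : 0 < β - k) (hα1 : β - k ≤ 1) {p p' : ℝ}
    (hp : p ∈ Icc (0:ℝ) 1) (hp' : p' ∈ Icc (0:ℝ) 1) :
    |Da β K k p - Da β K k p'|
      ≤ |K| * (2 * pB (Pa β k) + pB (derivative (Pa β k))) * |p - p'| ^ (β - k) := by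
  obtain ⟨h0, h1⟩ := hp; obtain ⟨h0', h1'⟩ := hp'
  set α := β - (k:ℝ)
  set a := p ^ α; set a' := p' ^ α
  set b := (1-p) ^ α; set b' := (1-p') ^ α
  set c := (Pa β k).eval p; set c' := (Pa β k).eval p'
  set Δ := |p - p'| ^ α with hΔ
  have hΔ0 : 0 ≤ Δ := Real.rpow_nonneg (abs_nonneg _) _
  have ha1 : |a| ≤ 1 := by
    rw [abs_of_nonneg (Real.rpow_nonneg h0 _)]; exact Real.rpow_le_one h0 h1 hα0.le
  have ha1' : |a'| ≤ 1 := by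
    rw [abs_of_nonneg (Real.rpow_nonneg h0' _)]; exact Real.rpow_le_one h0' h1' hα0.le
  have hb1 : |b| ≤ 1 := by
    rw [abs_of_nonneg (Real.rpow_nonneg (by linarith) _)]
    exact Real.rpow_le_one (by linarith) (by linarith) hα0.le
  have hb1' : |b'| ≤ 1 := by
    rw [abs_of_nonneg (Real.rpow_nonneg (by linarith) _)]
    exact Real.rpow_le_one (by linarith) (by linarith) hα0.le
  have hc : |c| ≤ pB (Pa β k) := abs_eval_le _ h0 h1
  have hc' : |c'| ≤ pB (Pa β k) := abs_eval_le _ h0' h1'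
  have haa : |a - a'| ≤ Δ := rpow_abs_sub_le hα0 hα1 h0 h0'
  have hbb : |b - b'| ≤ Δ := by
    have := rpow_abs_sub_le hα0 hα1 (by linarith : (0:ℝ) ≤ 1 - p) (by linarith : (0:ℝ) ≤ 1 - p')
    have h2 : |1 - p - (1 - p')| = |p - p'| := by rw [show (1:ℝ) - p - (1 - p') = -(p - p') by ring, abs_neg]
    rwa [h2] at this
  have hcc : |c - c'| ≤ pB (derivative (Pa β k)) * Δ := by
    have h3 := eval_lip (Pa β k) ⟨h0', h1'⟩ ⟨h0, h1⟩
    have h4 : |p - p'| ≤ Δ := abs_le_rpow_abs (by rw [abs_sub_le_iff]; constructor <;> linarith) hα0 hα1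
    calc |c - c'| ≤ pB (derivative (Pa β k)) * |p - p'| := h3
      _ ≤ pB (derivative (Pa β k)) * Δ := mul_le_mul_of_nonneg_left h4 (pB_nonneg _)
  have key : Da β K k p - Da β K k p'
      = K * ((a - a') * (b * c) + a' * ((b - b') * c) + a' * (b' * (c - c'))) := by
    unfold Da; ring
  rw [key, abs_mul]
  have step : |(a - a') * (b * c) + a' * ((b - b') * c) + a' * (b' * (c - c'))|
      ≤ Δ * (1 * pB (Pa β k)) + 1 * (Δ * pB (Pa β k)) + 1 * (1 * (pB (derivative (Pa β k)) * Δ)) := by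
    refine (abs_add_three _ _ _).trans ?_
    have hP := pB_nonneg (Pa β k)
    gcongr ?x1 + ?x2 + ?x3
    · rw [abs_mul, abs_mul]
      refine mul_le_mul haa (mul_le_mul hb1 hc (abs_nonneg _) zero_le_one) (by positivity) hΔ0
    · rw [abs_mul, abs_mul]
      refine mul_le_mul ha1' (mul_le_mul hbb hc (abs_nonneg _) hΔ0) (by positivity) zero_le_one
    · rw [abs_mul, abs_mul]
      refine mul_le_mul ha1' (mul_le_mul hb1' hcc (abs_nonneg _) zero_le_one) (by positivity) zero_le_one
  calc |K| * |(a - a') * (b * c) + a' * ((b - b') * c) + a' * (b' * (c - c'))|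
      ≤ |K| * (Δ * (1 * pB (Pa β k)) + 1 * (Δ * pB (Pa β k)) + 1 * (1 * (pB (derivative (Pa β k)) * Δ))) :=
        mul_le_mul_of_nonneg_left step (abs_nonneg _)
    _ = |K| * (2 * pB (Pa β k) + pB (derivative (Pa β k))) * Δ := by ring

lemma holderW_lt (β : ℝ) (hβ : 0 < β) : (holderW β : ℝ) < β := by
  unfold holderW
  rcases le_or_gt ⌈β⌉₊ 1 with h | h
  · have : ⌈β⌉₊ - 1 = 0 := by omega
    rw [this]; exact_mod_cast hβ
  · have h2 : (⌈β⌉₊ : ℝ) < β + 1 := by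
      exact_mod_cast Nat.ceil_lt_add_one hβ.le
    have h3 : ((⌈β⌉₊ - 1 : ℕ) : ℝ) = (⌈β⌉₊ : ℝ) - 1 := by
      have : 1 ≤ ⌈β⌉₊ := by omega
      push_cast [this]; ring
    rw [h3]; linarith

lemma le_holderW_add_one (β : ℝ) (hβ : 0 < β) : β ≤ (holderW β : ℝ) + 1 := by
  unfold holderW
  have h1 : 1 ≤ ⌈β⌉₊ := Nat.one_le_ceil_iff.mpr hβ
  have h3 : ((⌈β⌉₊ - 1 : ℕ) : ℝ) = (⌈β⌉₊ : ℝ) - 1 := by push_cast [h1]; ring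
  rw [h3]
  have := Nat.le_ceil β
  linarith

lemma rpow_ne_poly (β : ℝ) (hβ : 0 < β) (r : Polynomial ℝ) (hr : r.natDegree ≤ holderW β)
    (h : ∀ u ∈ Icc (0:ℝ) 1, r.eval u = u ^ β) : False := by
  set w := holderW β with hw
  have claim : ∀ k, k ≤ w + 1 → ∀ u ∈ Ioo (0:ℝ) 1,
      (derivative^[k] r).eval u = (∏ j ∈ Finset.range k, (β - j)) * u ^ (β - k) := by
    intro k
    induction k with
    | zero =>
      intro _ u hu
      simpa using (h u (Ioo_subset_Icc_self hu))
    | succ k ih =>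
      intro hk u hu
      have ih' := ih (by omega)
      have hne : EqOn (fun v => (derivative^[k] r).eval v)
          (fun v => (∏ j ∈ Finset.range k, (β - j)) * v ^ (β - k)) (Ioo (0:ℝ) 1) := ih'
      have hev : (fun v => (derivative^[k] r).eval v)
          =ᶠ[nhds u] (fun v => (∏ j ∈ Finset.range k, (β - j)) * v ^ (β - k)) :=
        Filter.eventuallyEq_of_mem (isOpen_Ioo.mem_nhds hu) hne
      have hd1 : deriv (fun v => (derivative^[k] r).eval v) u
          = (derivative^[k+1] r).eval u := by
        rw [Polynomial.deriv, Function.iterate_succ_apply']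
      have hd2 : deriv (fun v => (∏ j ∈ Finset.range k, (β - j)) * v ^ (β - k)) u
          = (∏ j ∈ Finset.range (k+1), (β - j)) * u ^ (β - (k+1)) := by
        have hdu : HasDerivAt (fun v : ℝ => (∏ j ∈ Finset.range k, (β - j)) * v ^ (β - k))
            ((∏ j ∈ Finset.range k, (β - j)) * ((β - k) * u ^ (β - k - 1))) u :=
          (Real.hasDerivAt_rpow_const (Or.inl (ne_of_gt hu.1))).const_mul _
        rw [hdu.deriv, Finset.prod_range_succ]
        push_cast
        rw [show β - (↑k+1) = β - ↑k - 1 by ring]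
        ring
      rw [← hd1, hev.deriv_eq, hd2]
      push_cast
      ring_nf
  have hzero : derivative^[w+1] r = 0 :=
    Polynomial.iterate_derivative_eq_zero (by omega)
  have h2 := claim (w+1) le_rfl (1/2) (by norm_num)
  rw [hzero] at h2
  simp only [eval_zero] at h2
  have hprod : (∏ j ∈ Finset.range (w+1), (β - j)) ≠ 0 := by
    refine Finset.prod_ne_zero_iff.mpr fun j hj => ?_
    have hj' : (j:ℝ) ≤ (w:ℝ) := by exact_mod_cast Nat.lt_add_one_iff.mp (Finset.mem_range.mp hj)
    have := holderW_lt β hβ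
    rw [← hw] at this
    intro hc; rw [sub_eq_zero] at hc; linarith
  have hpow : ((1:ℝ)/2) ^ (β - (w+1:ℕ)) ≠ 0 :=
    ne_of_gt (Real.rpow_pos_of_pos (by norm_num) _)
  exact (mul_ne_zero hprod hpow) h2.symm

lemma exists_gap (β : ℝ) (hβ : 0 < β) :
    ∃ E > 0, ∀ r : Polynomial ℝ, r.natDegree ≤ holderW β →
      ∃ u, u ∈ Icc (0:ℝ) 1 ∧ E ≤ |u ^ β - r.eval u| := by
  set w := holderW β with hw
  set f : C(↥(Icc (0:ℝ) 1), ℝ) :=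
    ⟨fun u => (u:ℝ) ^ β, by
      exact (Real.continuous_rpow_const hβ.le).comp continuous_subtype_val⟩ with hf
  set S : Submodule ℝ C(↥(Icc (0:ℝ) 1), ℝ) :=
    (Polynomial.degreeLT ℝ (w + 1)).map
      (Polynomial.toContinuousMapOnAlgHom (Icc (0:ℝ) 1)).toLinearMap with hS
  haveI : FiniteDimensional ℝ (Polynomial.degreeLT ℝ (w + 1)) :=
    (Polynomial.degreeLTEquiv ℝ (w + 1)).symm.finiteDimensional
  haveI : FiniteDimensional ℝ S := Module.Finite.map _ _
  have hclosed : IsClosed (S : Set C(↥(Icc (0:ℝ) 1), ℝ)) := S.closed_of_finiteDimensional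
  have hmem : ∀ r : Polynomial ℝ, r.natDegree ≤ w →
      (Polynomial.toContinuousMapOnAlgHom (Icc (0:ℝ) 1)) r ∈ S := by
    intro r hr
    refine ⟨r, ?_, rfl⟩
    show r ∈ Polynomial.degreeLT ℝ (w + 1)
    rw [Polynomial.mem_degreeLT]
    calc r.degree ≤ (r.natDegree : WithBot ℕ) := Polynomial.degree_le_natDegree
      _ < ((w + 1 : ℕ) : WithBot ℕ) := by exact_mod_cast Nat.lt_succ_of_le hr
  have hfS : f ∉ S := by
    rintro ⟨r, hrmem, hreq⟩
    have hrdeg : r.natDegree ≤ w := by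
      rcases eq_or_ne r 0 with h0 | h0
      · simp [h0]
      · have := Polynomial.mem_degreeLT.mp hrmem
        have := (Polynomial.natDegree_lt_iff_degree_lt h0).mpr this
        omega
    refine rpow_ne_poly β hβ r hrdeg fun u hu => ?_
    have := congrArg (fun F : C(↥(Icc (0:ℝ) 1), ℝ) => F ⟨u, hu⟩) hreq
    simpa [hf] using this
  have hpos : 0 < infDist f (S : Set C(↥(Icc (0:ℝ) 1), ℝ)) :=
    (hclosed.notMem_iff_infDist_pos ⟨0, S.zero_mem⟩).mp hfS
  refine ⟨infDist f (S : Set C(↥(Icc (0:ℝ) 1), ℝ)) / 2, by linarith, fun r hr => ?_⟩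
  by_contra hcon
  push_neg at hcon
  have hdle : dist f ((Polynomial.toContinuousMapOnAlgHom (Icc (0:ℝ) 1)) r)
      ≤ infDist f (S : Set C(↥(Icc (0:ℝ) 1), ℝ)) / 2 := by
    refine ContinuousMap.dist_le (by linarith) |>.mpr fun x => ?_
    have := hcon x x.2
    rw [Real.dist_eq]
    simp only [hf, ContinuousMap.coe_mk]
    have h2 : ((Polynomial.toContinuousMapOnAlgHom (Icc (0:ℝ) 1)) r) x = r.eval (x:ℝ) := by simp
    rw [h2]
    linarith [this]
  have := infDist_le_dist_of_mem (x := f) (hmem r hr)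
  linarith

lemma exists_isL2Proj (l : ℕ) (g : ℝ → ℝ) (hg : Continuous g) (a b : ℝ) :
    ∃ q : Polynomial ℝ, IsL2Proj l g (Icc a b) q := by
  classical
  set μ := volume.restrict (Icc a b) with hμ
  haveI : IsFiniteMeasure μ := by
    constructor
    rw [hμ, Measure.restrict_apply_univ, Real.volume_Icc]
    exact ENNReal.ofReal_lt_top
  have hmem : ∀ f : ℝ → ℝ, Continuous f → MemLp f 2 μ := by
    intro f hf
    obtain ⟨C, hC⟩ :=
      isCompact_Icc.exists_bound_of_continuousOn (hf.continuousOn : ContinuousOn f (Icc a b))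
    refine MemLp.of_bound hf.aestronglyMeasurable C ?_
    rw [hμ]
    exact (ae_restrict_iff' measurableSet_Icc).mpr (Filter.Eventually.of_forall fun x hx => hC x hx)
  -- Memℒp for polynomial evals
  have hmemP : ∀ r : Polynomial ℝ, MemLp (fun x => r.eval x) 2 μ := fun r =>
    hmem _ (r.continuous_aeval)
  -- monomials in Lp
  set mono : Fin (l+1) → Lp ℝ 2 μ := fun i => (hmemP (Polynomial.X ^ (i:ℕ))).toLp _ with hmono
  set T : Submodule ℝ (Lp ℝ 2 μ) := Submodule.span ℝ (Set.range mono) with hT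
  haveI : FiniteDimensional ℝ T := FiniteDimensional.span_of_finite ℝ (Set.finite_range mono)
  have hcomp : IsComplete (T : Set (Lp ℝ 2 μ)) := T.complete_of_finiteDimensional
  -- sums of toLp
  have toLp_sum : ∀ (s : Finset (Fin (l+1))) (f : Fin (l+1) → ℝ → ℝ)
      (hf : ∀ i, MemLp (f i) 2 μ) (hs : MemLp (fun x => ∑ i ∈ s, f i x) 2 μ),
      hs.toLp _ = ∑ i ∈ s, (hf i).toLp (f i) := by
    intro s
    induction s using Finset.induction with
    | empty =>
      intro f hf hs
      rw [Finset.sum_empty]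
      rw [show (MemLp.toLp _ hs) = MemLp.toLp (0 : ℝ → ℝ) (MeasureTheory.MemLp.zero) from
        MemLp.toLp_congr _ _ (Filter.Eventually.of_forall fun x => by simp)]
      exact MemLp.toLp_zero _
    | insert j s' hnotmem ih =>
      intro f hf hs
      have h1 : MemLp (fun x => ∑ i ∈ s', f i x) 2 μ :=
        (memLp_finset_sum' s' (fun i _ => hf i)).ae_eq
          (Filter.Eventually.of_forall fun x => by simp)
      rw [Finset.sum_insert hnotmem, ← ih f hf h1, ← MemLp.toLp_add (hf j) h1]
      exact MemLp.toLp_congr _ _ (Filter.Eventually.of_forall fun x => by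
        simp [Finset.sum_insert hnotmem, Pi.add_apply])
  
  -- toL : polynomial to Lp
  set toL : Polynomial ℝ → Lp ℝ 2 μ := fun r => (hmemP r).toLp _ with htoL
  have hkey : ∀ c : Fin (l+1) → ℝ,
      toL (∑ i : Fin (l+1), Polynomial.C (c i) * Polynomial.X ^ (i:ℕ))
        = ∑ i : Fin (l+1), c i • mono i := by
    intro c
    have hfi : ∀ i : Fin (l+1), MemLp (fun x : ℝ => c i * x ^ (i:ℕ)) 2 μ := by
      intro i
      exact hmem _ (by continuity)
    have hs : MemLp (fun x : ℝ => ∑ i : Fin (l+1), c i * x ^ (i:ℕ)) 2 μ :=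
      (hmemP (∑ i : Fin (l+1), Polynomial.C (c i) * Polynomial.X ^ (i:ℕ))).ae_eq
        (Filter.Eventually.of_forall fun x => by simp [Polynomial.eval_finset_sum])
    have h1 : toL (∑ i : Fin (l+1), Polynomial.C (c i) * Polynomial.X ^ (i:ℕ))
        = hs.toLp _ :=
      MemLp.toLp_congr _ _ (Filter.Eventually.of_forall fun x => by
        simp [Polynomial.eval_finset_sum])
    rw [h1, toLp_sum Finset.univ _ hfi hs]
    refine Finset.sum_congr rfl fun i _ => ?_
    rw [show c i • mono i = (((hmemP (Polynomial.X ^ (i:ℕ)))).const_smul (c i)).toLp _ from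
      (MemLp.toLp_const_smul _ _).symm]
    refine MemLp.toLp_congr _ _ (Filter.Eventually.of_forall fun x => by simp)
  have hTmem : ∀ r : Polynomial ℝ, r.natDegree ≤ l → toL r ∈ T := by
    intro r hr
    have h2 : toL r = ∑ i : Fin (l+1), r.coeff i • mono i := by
      rw [← hkey]
      refine MemLp.toLp_congr _ _ (Filter.Eventually.of_forall fun x => ?_)
      have hx := Polynomial.eval_eq_sum_range' (Nat.lt_succ_of_le hr) x
      simp only [Polynomial.eval_finset_sum, Polynomial.eval_mul, Polynomial.eval_C,
        Polynomial.eval_pow, Polynomial.eval_X]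
      rw [hx, Finset.sum_range]
    rw [h2]
    exact Submodule.sum_mem _ fun i _ =>
      Submodule.smul_mem _ _ (Submodule.subset_span ⟨i, rfl⟩)
  have hTrep : ∀ v, v ∈ T → ∃ r : Polynomial ℝ, r.natDegree ≤ l ∧ v = toL r := by
    intro v hv
    rw [hT] at hv
    obtain ⟨c, hc⟩ := (Submodule.mem_span_range_iff_exists_fun ℝ).mp hv
    refine ⟨∑ i : Fin (l+1), Polynomial.C (c i) * Polynomial.X ^ (i:ℕ), ?_, ?_⟩
    · refine Polynomial.natDegree_sum_le_of_forall_le _ _ fun i _ => ?_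
      exact (Polynomial.natDegree_C_mul_X_pow_le _ _).trans (Nat.lt_succ_iff.mp i.2)
    · rw [hkey, hc]
  set G : Lp ℝ 2 μ := (hmem g hg).toLp _ with hG
  obtain ⟨v, hvT, hvmin⟩ := T.exists_norm_eq_iInf_of_complete_subspace hcomp G
  obtain ⟨q, hq, rfl⟩ := hTrep v hvT
  have hconv : ∀ r : Polynomial ℝ,
      (∫ u in Icc a b, (g u - r.eval u)^2) = ‖G - toL r‖^2 := by
    intro r
    have hsub : MemLp (fun x => g x - r.eval x) 2 μ := (hmem g hg).sub (hmemP r)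
    have h1 : G - toL r = hsub.toLp _ := by
      rw [hG, htoL, ← MemLp.toLp_sub (hmem g hg) (hmemP r)]
      exact MemLp.toLp_congr _ _ (Filter.Eventually.of_forall fun x => rfl)
    have h3 : (@inner ℝ _ _ (hsub.toLp _) (hsub.toLp _)) = ∫ x, (g x - r.eval x)^2 ∂μ := by
      rw [MeasureTheory.L2.inner_def]
      refine integral_congr_ae ?_
      filter_upwards [hsub.coeFn_toLp] with x hx
      rw [hx]
      simp [RCLike.inner_apply]
    calc (∫ u in Icc a b, (g u - r.eval u)^2) = ∫ x, (g x - r.eval x)^2 ∂μ := rfl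
      _ = (@inner ℝ _ _ (hsub.toLp _) (hsub.toLp _)) := h3.symm
      _ = ‖hsub.toLp _‖^2 := real_inner_self_eq_norm_sq _
      _ = ‖G - toL r‖^2 := by rw [h1]
  refine ⟨q, hq, fun r hr => ?_⟩
  rw [hconv q, hconv r]
  have h2 : ‖G - toL q‖ ≤ ‖G - toL r‖ := by
    rw [hvmin]
    exact ciInf_le ⟨0, by rintro y ⟨w, rfl⟩; exact norm_nonneg _⟩
      (⟨toL r, hTmem r hr⟩ : (T : Set (Lp ℝ 2 μ)))
  exact pow_le_pow_left₀ (norm_nonneg _) h2 2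


lemma scale_bound (β K E : ℝ) (hβ : 0 < β) (hK : 0 < K) (hE : 0 < E)
    (hgap : ∀ r : Polynomial ℝ, r.natDegree ≤ holderW β →
      ∃ u, u ∈ Icc (0:ℝ) 1 ∧ E ≤ |u ^ β - r.eval u|)
    (C₀ : ℕ) (hC₀ : ∀ x : ℝ, 0 ≤ x → x ≤ (2:ℝ)^(-(C₀:ℝ)) → 1 - (1-x)^β ≤ E/2)
    (c : ℕ) (r : Polynomial ℝ) (hr : r.natDegree ≤ holderW β) :
    ∃ p, 0 ≤ p ∧ p ≤ (2:ℝ)^(-(c:ℝ)) ∧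
      (K * E / 2 * (2:ℝ)^(-(C₀:ℝ)*β)) * (2:ℝ)^(-(c:ℝ)*β) ≤ |r.eval p - Da β K 0 p| := by
  set c' : ℕ := max c C₀ with hc'
  set h : ℝ := (2:ℝ)^(-(c':ℝ)) with hh
  have hhpos : 0 < h := Real.rpow_pos_of_pos two_pos _
  have hhle1 : h ≤ 1 := by
    rw [hh]
    calc (2:ℝ)^(-(c':ℝ)) ≤ (2:ℝ)^(0:ℝ) :=
          Real.rpow_le_rpow_of_exponent_le one_le_two (neg_nonpos.mpr (Nat.cast_nonneg _))
      _ = 1 := Real.rpow_zero 2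
  have hhc : h ≤ (2:ℝ)^(-(c:ℝ)) := by
    refine Real.rpow_le_rpow_of_exponent_le one_le_two (neg_le_neg ?_)
    exact_mod_cast le_max_left c C₀
  have hhC₀ : h ≤ (2:ℝ)^(-(C₀:ℝ)) := by
    refine Real.rpow_le_rpow_of_exponent_le one_le_two (neg_le_neg ?_)
    exact_mod_cast le_max_right c C₀
  have hKh : 0 < K * h^β := by positivity
  set rt := (K * h^β)⁻¹ • (r.comp (Polynomial.C h * Polynomial.X)) with hrt
  have hrtdeg : rt.natDegree ≤ holderW β := by
    refine (Polynomial.natDegree_smul_le _ _).trans ?_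
    rw [Polynomial.natDegree_comp]
    have h1 : (Polynomial.C h * Polynomial.X).natDegree ≤ 1 :=
      (Polynomial.natDegree_mul_le).trans (by simp)
    calc r.natDegree * (Polynomial.C h * Polynomial.X).natDegree
        ≤ r.natDegree * 1 := Nat.mul_le_mul_left _ h1
      _ = r.natDegree := mul_one _
      _ ≤ holderW β := hr
  obtain ⟨u, hu, hgapu⟩ := hgap rt hrtdeg
  set p := h * u with hp
  have hp0 : 0 ≤ p := mul_nonneg hhpos.le hu.1
  have hple : p ≤ h := by
    calc p = h * u := rfl
      _ ≤ h * 1 := mul_le_mul_of_nonneg_left hu.2 hhpos.le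
      _ = h := mul_one h
  have hp1 : p ≤ 1 := hple.trans hhle1
  have hrteval : rt.eval u = (K * h^β)⁻¹ * r.eval p := by
    rw [hrt]
    simp [Polynomial.eval_smul, Polynomial.eval_comp, smul_eq_mul, hp]
  have hpβ : p ^ β = h^β * u^β := Real.mul_rpow hhpos.le hu.1
  have hgp : Da β K 0 p = K * (h^β * u^β * (1-p)^β) := by
    show K * (p ^ (β - (0:ℕ)) * ((1 - p) ^ (β - (0:ℕ)) * (Pa β 0).eval p)) = _
    simp only [Nat.cast_zero, sub_zero, Pa, Polynomial.eval_one]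
    rw [hpβ]; ring
  have hub : u ^ β * (1 - (1-p)^β) ≤ E/2 := by
    have h1 : u^β ≤ 1 := Real.rpow_le_one hu.1 hu.2 hβ.le
    have h2 : 1 - (1-p)^β ≤ E/2 := hC₀ p hp0 (hple.trans hhC₀)
    have h3 : 0 ≤ 1 - (1-p)^β := by
      have := Real.rpow_le_one (by linarith : (0:ℝ) ≤ 1-p) (by linarith) hβ.le
      linarith
    nlinarith
  have hub0 : 0 ≤ 1 - (1-p)^β := by
    have := Real.rpow_le_one (by linarith : (0:ℝ) ≤ 1-p) (by linarith) hβ.le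
    linarith
  have main : K * h^β * (E/2) ≤ |r.eval p - Da β K 0 p| := by
    have e1 : |r.eval p - Da β K 0 p| = (K * h^β) * |rt.eval u - u^β * (1-p)^β| := by
      rw [hgp, hrteval]
      have e0 : r.eval p - K * (h^β * u^β * (1-p)^β)
          = (K * h^β) * ((K * h^β)⁻¹ * r.eval p - u^β * (1-p)^β) := by
        field_simp
      rw [e0, abs_mul, abs_of_pos hKh]
    have tri := abs_sub_le (rt.eval u) (u^β * (1-p)^β) (u^β)
    have e3 : |u^β * (1-p)^β - u^β| ≤ E/2 := by
      have : |u^β * (1-p)^β - u^β| = u^β * (1 - (1-p)^β) := by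
        rw [show u^β * (1-p)^β - u^β = -(u^β * (1 - (1-p)^β)) by ring, abs_neg]
        exact abs_of_nonneg (mul_nonneg (Real.rpow_nonneg hu.1 _) hub0)
      rw [this]; exact hub
    have e4 : E ≤ |rt.eval u - u^β| := by rwa [abs_sub_comm] at hgapu
    have e2 : E - E/2 ≤ |rt.eval u - u^β * (1-p)^β| := by linarith
    calc K * h^β * (E/2) = (K * h^β) * (E - E/2) := by ring
      _ ≤ (K * h^β) * |rt.eval u - u^β * (1-p)^β| := mul_le_mul_of_nonneg_left e2 hKh.le
      _ = |r.eval p - Da β K 0 p| := e1.symm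
  have hfin : (2:ℝ)^(-(C₀:ℝ)*β) * (2:ℝ)^(-(c:ℝ)*β) ≤ h^β := by
    have e5 : h^β = (2:ℝ)^((-(c':ℝ))*β) := by
      rw [hh, ← Real.rpow_mul (by norm_num : (0:ℝ) ≤ 2)]
    have e6 : (2:ℝ)^(-(C₀:ℝ)*β) * (2:ℝ)^(-(c:ℝ)*β) = (2:ℝ)^(-(C₀:ℝ)*β + -(c:ℝ)*β) :=
      (Real.rpow_add two_pos _ _).symm
    rw [e5, e6]
    refine Real.rpow_le_rpow_of_exponent_le one_le_two ?_
    have hcc : (c':ℝ) ≤ (C₀:ℝ) + (c:ℝ) := by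
      have : c' ≤ C₀ + c := by omega
      exact_mod_cast this
    nlinarith
  refine ⟨p, hp0, hple.trans hhc, ?_⟩
  calc (K * E / 2 * (2:ℝ)^(-(C₀:ℝ)*β)) * (2:ℝ)^(-(c:ℝ)*β)
      = (K * (E/2)) * ((2:ℝ)^(-(C₀:ℝ)*β) * (2:ℝ)^(-(c:ℝ)*β)) := by ring
    _ ≤ (K * (E/2)) * (h^β) := by
        refine mul_le_mul_of_nonneg_left hfin (by positivity)
    _ = K * h^β * (E/2) := by ring
    _ ≤ |r.eval p - Da β K 0 p| := main


lemma holder_class_Da (β L : ℝ) (hβ : 0 < β) (hL : 0 < L) :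
    ∃ K : ℝ, 0 < K ∧ K ≤ 1 ∧
      HolderClass β L (Da β K 0) (Icc 0 1) ∧
      (∀ k, k ≤ holderW β → ∀ x ∈ Icc (0:ℝ) 1,
        iteratedDerivWithin k (Da β K 0) (Icc (0:ℝ) 1) x = Da β K k x) := by
  set w := holderW β with hwdef
  have hw1 : (w:ℝ) < β := holderW_lt β hβ
  have hw2 : β ≤ (w:ℝ) + 1 := le_holderW_add_one β hβ
  set CB : ℝ := (Finset.range (w+1)).sup' Finset.nonempty_range_add_one (fun k => pB (Pa β k)) with hCB
  have hCBk : ∀ k, k ≤ w → pB (Pa β k) ≤ CB := by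
    intro k hk
    exact Finset.le_sup' (fun k => pB (Pa β k)) (Finset.mem_range.mpr (by omega))
  have hCB0 : 0 ≤ CB := le_trans (pB_nonneg _) (hCBk 0 (Nat.zero_le _))
  set CH : ℝ := 2 * pB (Pa β w) + pB (derivative (Pa β w)) with hCH
  have hCH0 : 0 ≤ CH := by have := pB_nonneg (Pa β w); have := pB_nonneg (derivative (Pa β w)); positivity
  set CL : ℝ := pB (Pa β 1) with hCL
  set M : ℝ := max (max CB CH) (max CL 1) with hM
  have hM1 : (1:ℝ) ≤ M := le_trans (le_max_right CL 1) (le_max_right _ _)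
  have hMpos : 0 < M := lt_of_lt_of_le one_pos hM1
  set K : ℝ := min 1 (L / M) with hKdef
  have hK0 : 0 < K := lt_min one_pos (div_pos hL hMpos)
  have hK1 : K ≤ 1 := min_le_left _ _
  have hKX : ∀ X : ℝ, 0 ≤ X → X ≤ M → K * X ≤ L := by
    intro X h0 hXM
    calc K * X ≤ (L/M) * M :=
          mul_le_mul (min_le_right _ _) hXM h0 (by positivity)
      _ = L := by field_simp
  have hchain : ∀ k < w, ∀ x ∈ Icc (0:ℝ) 1, HasDerivAt (Da β K k) (Da β K (k+1) x) x := by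
    intro k hk x hx
    refine hasDerivAt_Da ?_ hx.1 hx.2
    have : (k:ℝ) + 1 ≤ (w:ℝ) := by exact_mod_cast hk
    linarith
  have hcd : ContDiffOn ℝ w (Da β K 0) (Icc 0 1) :=
    chain_contDiffOn w (Da β K) hchain (continuous_Da (by linarith)).continuousOn
  have hit := chain_iteratedDerivWithin w (Da β K) hchain
  have hbound : ∀ k, k ≤ w → ∀ x ∈ Icc (0:ℝ) 1, |Da β K k x| ≤ L := by
    intro k hk x hx
    have hkc : (k:ℝ) ≤ (w:ℝ) := by exact_mod_cast hk
    refine (abs_Da_le (by linarith) hx.1 hx.2).trans ?_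
    rw [abs_of_pos hK0]
    exact hKX _ (pB_nonneg _) ((hCBk k hk).trans (le_trans (le_max_left _ _) (le_max_left _ _)))
  have hhold : ∀ p ∈ Icc (0:ℝ) 1, ∀ p' ∈ Icc (0:ℝ) 1,
      |Da β K w p - Da β K w p'| ≤ L * |p - p'| ^ (β - (w:ℝ)) := by
    intro p hp p' hp'
    refine (holder_Da (by linarith) (by linarith) hp hp').trans ?_
    rw [abs_of_pos hK0]
    refine mul_le_mul_of_nonneg_right ?_ (Real.rpow_nonneg (abs_nonneg _) _)
    exact hKX _ hCH0 (le_trans (le_max_right CB CH) (le_max_left _ _))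
  have H0β : HolderClass0 β L (Da β K 0) (Icc 0 1) := by
    refine ⟨hcd, ?_, ?_⟩
    · intro k hk p hp
      rw [hit k hk p hp]; exact hbound k hk p hp
    · intro p hp p' hp'
      rw [hit w le_rfl p hp, hit w le_rfl p' hp']
      exact hhold p hp p' hp'
  refine ⟨K, hK0, hK1, ?_, hit⟩
  unfold HolderClass
  by_cases h1β : 1 ≤ β
  · rw [if_pos h1β]
    refine ⟨H0β, ?_, ?_, ?_⟩
    · have h10 : holderW 1 = 0 := by unfold holderW; norm_num
      rw [h10]
      exact contDiffOn_zero.mpr hcd.continuousOn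
    · intro k hk p hp
      have h10 : holderW 1 = 0 := by unfold holderW; norm_num
      rw [h10] at hk
      have hk0 : k = 0 := Nat.le_zero.mp hk
      subst hk0
      rw [iteratedDerivWithin_zero]
      exact hbound 0 (Nat.zero_le _) p hp
    · intro p hp p' hp'
      have h10 : holderW 1 = 0 := by unfold holderW; norm_num
      rw [h10]
      simp only [iteratedDerivWithin_zero, Nat.cast_zero, sub_zero, Real.rpow_one]
      have hder : ∀ x ∈ Icc (0:ℝ) 1, HasDerivWithinAt (Da β K 0) (Da β K 1 x) (Icc (0:ℝ) 1) x := by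
        intro x hx
        exact (hasDerivAt_Da (by push_cast; linarith) hx.1 hx.2).hasDerivWithinAt
      have hbd : ∀ x ∈ Icc (0:ℝ) 1, ‖Da β K 1 x‖ ≤ K * CL := by
        intro x hx
        rw [Real.norm_eq_abs]
        refine (abs_Da_le (by push_cast; linarith) hx.1 hx.2).trans ?_
        rw [abs_of_pos hK0]
      have hlip := Convex.norm_image_sub_le_of_norm_hasDerivWithin_le hder hbd
        (convex_Icc 0 1) hp' hp
      calc |Da β K 0 p - Da β K 0 p'| ≤ (K * CL) * |p - p'| := by
            simpa [Real.norm_eq_abs] using hlip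
        _ ≤ L * |p - p'| := mul_le_mul_of_nonneg_right
            (hKX CL (pB_nonneg _) (le_trans (le_max_left CL 1) (le_max_right _ _))) (abs_nonneg _)
  · rw [if_neg h1β]
    exact H0β


/-- existence of a Hölder smooth, self-similar function on `[0,1]` with a
unique maximizer at `1/2` and vanishing derivatives at the endpoints. -/
theorem exists_selfsimilar_holder (β L : ℝ) (hβ : 0 < β) (hL : 0 < L) :
    ∃ M₂ : ℝ, 0 < M₂ ∧ ∃ g : ℝ → ℝ,
      (∀ x ∈ Set.Icc (0:ℝ) 1, g x ∈ Set.Icc (0:ℝ) 1) ∧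
      HolderClass β L g (Set.Icc 0 1) ∧
      (∀ c : ℕ, 0 < c → ∃ i : ℕ, i < 2 ^ c ∧ ∃ q : Polynomial ℝ,
        IsL2Proj (holderW β) g (Set.Icc ((i : ℝ)/2 ^ c) (((i : ℝ) + 1)/2 ^ c)) q ∧
        ∃ p ∈ Set.Icc ((i : ℝ)/2 ^ c) (((i : ℝ) + 1)/2 ^ c),
          M₂ * (2 : ℝ) ^ (-(c : ℝ) * β) ≤ |q.eval p - g p|) ∧
      (∀ x ∈ Set.Icc (0:ℝ) 1, g x ≤ g (1/2)) ∧
      (∀ x ∈ Set.Icc (0:ℝ) 1, g x = g (1/2) → x = 1/2) ∧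
      (∀ k : ℕ, k ≤ holderW β →
        iteratedDerivWithin k g (Set.Icc 0 1) 0 = 0 ∧
        iteratedDerivWithin k g (Set.Icc 0 1) 1 = 0) := by
  obtain ⟨E, hE, hgap⟩ := exists_gap β hβ
  -- choose C₀
  have hcont : ContinuousAt (fun x : ℝ => 1 - (1-x)^β) 0 := by
    have h1 : ContinuousAt (fun y : ℝ => y ^ β) ((fun x : ℝ => (1:ℝ) - x) 0) :=
      Real.continuousAt_rpow_const _ _ (Or.inr hβ.le)
    exact continuousAt_const.sub (h1.comp (continuousAt_const.sub continuousAt_id))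
  obtain ⟨δ, hδpos, hδ⟩ := Metric.continuousAt_iff.mp hcont (E/2) (by linarith)
  obtain ⟨C₀, hC₀lt⟩ := exists_pow_lt_of_lt_one hδpos (by norm_num : (1:ℝ)/2 < 1)
  have h2C₀ : (2:ℝ)^(-(C₀:ℝ)) < δ := by
    rw [Real.rpow_neg (by norm_num : (0:ℝ) ≤ 2), Real.rpow_natCast]
    calc ((2:ℝ)^C₀)⁻¹ = ((1:ℝ)/2)^C₀ := by rw [one_div, inv_pow]
      _ < δ := hC₀lt
  have hC₀ : ∀ x : ℝ, 0 ≤ x → x ≤ (2:ℝ)^(-(C₀:ℝ)) → 1 - (1-x)^β ≤ E/2 := by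
    intro x h0 hx
    have hdist : dist x 0 < δ := by
      rw [Real.dist_eq, sub_zero, abs_of_nonneg h0]; linarith
    have h2 := hδ hdist
    rw [Real.dist_eq] at h2
    simp only [sub_zero, Real.one_rpow, sub_self, sub_zero] at h2
    have := abs_lt.mp h2
    linarith [this.2]
  obtain ⟨K, hK0, hK1, hHolder, hit⟩ := holder_class_Da β L hβ hL
  have hwβ : (holderW β : ℝ) < β := holderW_lt β hβ
  have hgx : ∀ x, 0 ≤ x → x ≤ 1 → Da β K 0 x = K * (x*(1-x))^β := by
    intro x h0 h1
    show K * (x ^ (β - ((0:ℕ):ℝ)) * ((1-x) ^ (β - ((0:ℕ):ℝ)) * (Pa β 0).eval x)) = _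
    simp only [Pa, Polynomial.eval_one, Nat.cast_zero, sub_zero, mul_one]
    rw [Real.mul_rpow h0 (by linarith)]
  refine ⟨K * E / 2 * (2:ℝ)^(-(C₀:ℝ)*β), by positivity, Da β K 0, ?_, hHolder, ?_, ?_, ?_, ?_⟩
  · -- range
    intro x hx
    rw [hgx x hx.1 hx.2]
    constructor
    · exact mul_nonneg hK0.le (Real.rpow_nonneg (by nlinarith [hx.1, hx.2, sq_nonneg (x - 1/2)]) _)
    · calc K * (x*(1-x))^β ≤ 1 * 1 := by
            refine mul_le_mul hK1 ?_ (Real.rpow_nonneg (by nlinarith [hx.1, hx.2, sq_nonneg (x - 1/2)]) _) zero_le_one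
            exact Real.rpow_le_one (by nlinarith [hx.1, hx.2, sq_nonneg (x - 1/2)]) (by nlinarith [hx.1, hx.2, sq_nonneg (x - 1/2)]) hβ.le
        _ = 1 := mul_one 1
  · -- L2 projection bullet
    intro c _
    refine ⟨0, Nat.pow_pos (by norm_num), ?_⟩
    obtain ⟨q, hq⟩ := exists_isL2Proj (holderW β) (Da β K 0)
      (continuous_Da (by simp only [Nat.cast_zero, sub_zero]; linarith))
      (((0:ℕ):ℝ)/2^c) ((((0:ℕ):ℝ)+1)/2^c)
    refine ⟨q, hq, ?_⟩
    obtain ⟨p, hp0, hpc, hplb⟩ := scale_bound β K E hβ hK0 hE hgap C₀ hC₀ c q hq.1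
    have hcast : (2:ℝ)^(-(c:ℝ)) = (((0:ℕ):ℝ)+1)/2^c := by
      rw [Real.rpow_neg (by norm_num : (0:ℝ) ≤ 2), Real.rpow_natCast]
      norm_num
    refine ⟨p, ⟨by simpa using hp0, by rw [← hcast]; exact hpc⟩, ?_⟩
    exact hplb
  · -- max
    intro x hx
    rw [hgx x hx.1 hx.2, hgx (1/2) (by norm_num) (by norm_num)]
    refine mul_le_mul_of_nonneg_left ?_ hK0.le
    exact Real.rpow_le_rpow (by nlinarith [hx.1, hx.2, sq_nonneg (x - 1/2)]) (by nlinarith [hx.1, hx.2, sq_nonneg (x - 1/2)]) hβ.le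
  · -- uniqueness
    intro x hx heq
    by_contra hne
    have hsq : 0 < (x - 1/2)^2 :=
      lt_of_le_of_ne (sq_nonneg _) (Ne.symm (pow_ne_zero _ (sub_ne_zero.mpr hne)))
    have hlt : x*(1-x) < (1/2 : ℝ)*(1-1/2) := by nlinarith
    have : Da β K 0 x < Da β K 0 (1/2) := by
      rw [hgx x hx.1 hx.2, hgx (1/2) (by norm_num) (by norm_num)]
      exact mul_lt_mul_of_pos_left
        (Real.rpow_lt_rpow (by nlinarith [hx.1, hx.2, sq_nonneg (x - 1/2)]) hlt hβ) hK0
    linarith [this, heq.le, heq.ge]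
  · -- endpoints
    intro k hk
    have hkβ : β - (k:ℝ) ≠ 0 := by
      have : (k:ℝ) ≤ (holderW β : ℝ) := by exact_mod_cast hk
      intro hcon; rw [sub_eq_zero] at hcon; rw [← hcon] at this; linarith
    constructor
    · rw [hit k hk 0 (by norm_num)]
      show K * ((0:ℝ) ^ (β - (k:ℝ)) * (((1:ℝ)-0) ^ (β - (k:ℝ)) * (Pa β k).eval 0)) = 0
      rw [Real.zero_rpow hkβ]; ring
    · rw [hit k hk 1 (by norm_num)]
      show K * ((1:ℝ) ^ (β - (k:ℝ)) * (((1:ℝ)-1) ^ (β - (k:ℝ)) * (Pa β k).eval 1)) = 0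
      rw [show (1:ℝ)-1 = 0 by norm_num, Real.zero_rpow hkβ]; ring
end

section
/- Let A and B be n₀ × n₀ real symmetric matrices with B positive definite, and let λ_min(B) denote the smallest eigenvalue of B. If ‖A − B‖ ≤ λ_min(B)/2, where ‖·‖ denotes the ℓ²-operator norm, then A is invertible and ‖A⁻¹ − B⁻¹‖ ≤ 2(1 + √5)·‖A − B‖·λ_min(B)^{−2}. -/
open Matrix

/-- Euclidean norm of a vector in `ℝ^n`. -/
noncomputable def vecNorm {n : ℕ} (v : Fin n → ℝ) : ℝ := Real.sqrt (∑ i, v i ^ 2)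

/-- ℓ²-operator norm of a square real matrix: `sup_{x ≠ 0} ‖Mx‖₂ / ‖x‖₂`. -/
noncomputable def opNorm {n : ℕ} (M : Matrix (Fin n) (Fin n) ℝ) : ℝ :=
  sSup ((fun x => vecNorm (M.mulVec x) / vecNorm x) '' {x : Fin n → ℝ | x ≠ 0})

/-- Smallest eigenvalue of a square real matrix. -/
noncomputable def lambdaMin {n : ℕ} (B : Matrix (Fin n) (Fin n) ℝ) : ℝ :=
  sInf {μ : ℝ | ∃ v : Fin n → ℝ, v ≠ 0 ∧ B.mulVec v = μ • v}

lemma vecNorm_eq {n : ℕ} (v : Fin n → ℝ) :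
    vecNorm v = ‖(WithLp.equiv 2 (Fin n → ℝ)).symm v‖ := by
  rw [EuclideanSpace.norm_eq]
  simp [vecNorm, Real.norm_eq_abs, sq_abs]

lemma clm_apply_eq {n : ℕ} (M : Matrix (Fin n) (Fin n) ℝ) (x : Fin n → ℝ) :
    Matrix.toEuclideanCLM (𝕜 := ℝ) M ((WithLp.equiv 2 (Fin n → ℝ)).symm x) =
      (WithLp.equiv 2 (Fin n → ℝ)).symm (M.mulVec x) := by
  exact Matrix.toEuclideanCLM_toLp M x

lemma opNorm_eq {n : ℕ} (hn : 0 < n) (M : Matrix (Fin n) (Fin n) ℝ) :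
    opNorm M = ‖Matrix.toEuclideanCLM (𝕜 := ℝ) M‖ := by
  set f := Matrix.toEuclideanCLM (𝕜 := ℝ) M with hf
  have key : ∀ x : Fin n → ℝ, x ≠ 0 → vecNorm (M.mulVec x) / vecNorm x ≤ ‖f‖ := by
    intro x hx
    have hx' : (WithLp.equiv 2 (Fin n → ℝ)).symm x ≠ 0 := by
      simpa using hx
    rw [vecNorm_eq, vecNorm_eq, div_le_iff₀ (norm_pos_iff.2 hx'), ← clm_apply_eq]
    exact f.le_opNorm _
  have hne : ((fun x => vecNorm (M.mulVec x) / vecNorm x) '' {x : Fin n → ℝ | x ≠ 0}).Nonempty := by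
    refine ⟨_, ⟨fun _ => (1:ℝ), ?_, rfl⟩⟩
    intro h
    exact one_ne_zero (congrFun h ⟨0, hn⟩ : (1:ℝ) = 0)
  have hbdd : BddAbove ((fun x => vecNorm (M.mulVec x) / vecNorm x) '' {x : Fin n → ℝ | x ≠ 0}) :=
    ⟨‖f‖, by rintro y ⟨x, hx, rfl⟩; exact key x hx⟩
  refine le_antisymm (csSup_le hne (by rintro y ⟨x, hx, rfl⟩; exact key x hx)) ?_
  have h0 : (0:ℝ) ≤ opNorm M := by
    obtain ⟨y, x, hx, rfl⟩ := hne
    refine le_trans ?_ (le_csSup hbdd ⟨x, hx, rfl⟩)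
    have h1 : 0 ≤ vecNorm (M.mulVec x) := Real.sqrt_nonneg _
    have h2 : 0 ≤ vecNorm x := Real.sqrt_nonneg _
    positivity
  refine f.opNorm_le_bound h0 fun y => ?_
  rcases eq_or_ne y 0 with rfl | hy
  · simp
  · set x : Fin n → ℝ := WithLp.equiv 2 (Fin n → ℝ) y with hxdef
    have hy' : y = (WithLp.equiv 2 (Fin n → ℝ)).symm x := rfl
    have hx : x ≠ 0 := by
      intro h
      apply hy
      rw [hy', h]; simp
    have hxn : vecNorm x = ‖y‖ := by rw [vecNorm_eq, ← hy']
    have hxpos : 0 < ‖y‖ := norm_pos_iff.2 hy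
    have hmem : vecNorm (M.mulVec x) / vecNorm x ≤ opNorm M := le_csSup hbdd ⟨x, hx, rfl⟩
    have hfx : ‖f y‖ = vecNorm (M.mulVec x) := by
      rw [vecNorm_eq, hy', clm_apply_eq]
    rw [hfx]
    have := (div_le_iff₀ (hxn ▸ hxpos)).1 hmem
    calc vecNorm (M.mulVec x) ≤ opNorm M * vecNorm x := by linarith [this]
    _ = opNorm M * ‖y‖ := by rw [hxn]

section spec
variable {n : ℕ} {B : Matrix (Fin n) (Fin n) ℝ}

lemma eigen_repr (hB : B.IsHermitian) (x : EuclideanSpace ℝ (Fin n)) (i : Fin n) :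
    hB.eigenvectorBasis.repr (Matrix.toEuclideanLin B x) i
      = hB.eigenvalues i * hB.eigenvectorBasis.repr x i := by
  have hsym := (Matrix.isHermitian_iff_isSymmetric.1 hB)
  have he : Matrix.toEuclideanLin B (hB.eigenvectorBasis i)
      = hB.eigenvalues i • hB.eigenvectorBasis i := by
    have := hB.mulVec_eigenvectorBasis i
    apply (WithLp.equiv 2 (Fin n → ℝ)).injective
    simpa using this
  rw [OrthonormalBasis.repr_apply_apply, OrthonormalBasis.repr_apply_apply,
    ← hsym (hB.eigenvectorBasis i) x, he, real_inner_smul_left]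

lemma lambdaMin_spec (hn : 0 < n) (hB : B.IsHermitian) :
    (∃ i, lambdaMin B = hB.eigenvalues i) ∧ ∀ i, lambdaMin B ≤ hB.eigenvalues i := by
  set S := {μ : ℝ | ∃ v : Fin n → ℝ, v ≠ 0 ∧ B.mulVec v = μ • v} with hS
  have mem_range : ∀ μ ∈ S, ∃ i, μ = hB.eigenvalues i := by
    rintro μ ⟨v, hv, hBv⟩
    set w : EuclideanSpace ℝ (Fin n) := (WithLp.equiv 2 (Fin n → ℝ)).symm v with hw
    have hw0 : w ≠ 0 := by
      intro h; apply hv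
      have := congrArg (WithLp.equiv 2 (Fin n → ℝ)) h
      simpa [hw] using this
    have hTw : Matrix.toEuclideanLin B w = μ • w := by
      rw [hw, show (WithLp.equiv 2 (Fin n → ℝ)).symm v = WithLp.toLp 2 v from rfl, Matrix.toEuclideanLin_apply_piLp_toLp, hBv]
      simp
    have : ∃ i, hB.eigenvectorBasis.repr w i ≠ 0 := by
      by_contra h
      push_neg at h
      apply hw0
      have : hB.eigenvectorBasis.repr w = 0 := by
        ext i; exact h i
      simpa using congrArg hB.eigenvectorBasis.repr.symm this
    obtain ⟨i, hi⟩ := this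
    have h1 := eigen_repr hB w i
    rw [hTw, _root_.map_smul] at h1
    have : μ * hB.eigenvectorBasis.repr w i = hB.eigenvalues i * hB.eigenvectorBasis.repr w i := by
      simpa using h1
    exact ⟨i, mul_right_cancel₀ hi this⟩
  have eigen_mem : ∀ i, hB.eigenvalues i ∈ S := by
    intro i
    refine ⟨WithLp.equiv 2 (Fin n → ℝ) (hB.eigenvectorBasis i), ?_, ?_⟩
    · intro h
      apply hB.eigenvectorBasis.orthonormal.ne_zero i
      apply (WithLp.equiv 2 (Fin n → ℝ)).injective
      simpa using h
    · simpa using hB.mulVec_eigenvectorBasis i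
  have hne : Nonempty (Fin n) := ⟨⟨0, hn⟩⟩
  set m := Finset.univ.inf' (Finset.univ_nonempty) hB.eigenvalues with hm
  have hlb : ∀ μ ∈ S, m ≤ μ := by
    rintro μ hμ
    obtain ⟨i, rfl⟩ := mem_range μ hμ
    exact Finset.inf'_le _ (Finset.mem_univ i)
  have hbdd : BddBelow S := ⟨m, hlb⟩
  obtain ⟨i₀, hi₀⟩ := Finset.exists_mem_eq_inf' (Finset.univ_nonempty) hB.eigenvalues
  have hmeq : m = hB.eigenvalues i₀ := hi₀.2
  have h1 : lambdaMin B ≤ m := by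
    rw [hmeq]
    exact csInf_le hbdd (eigen_mem i₀)
  have h2 : m ≤ lambdaMin B := le_csInf ⟨_, eigen_mem i₀⟩ hlb
  have heq : lambdaMin B = m := le_antisymm h1 h2
  exact ⟨⟨i₀, heq.trans hi₀.2⟩, fun i => heq ▸ Finset.inf'_le _ (Finset.mem_univ i)⟩

end spec

lemma norm_lower {n : ℕ} {B : Matrix (Fin n) (Fin n) ℝ} (hB : B.IsHermitian) {lam : ℝ}
    (h0 : 0 ≤ lam) (hlb : ∀ i, lam ≤ hB.eigenvalues i) (x : EuclideanSpace ℝ (Fin n)) :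
    lam * ‖x‖ ≤ ‖Matrix.toEuclideanCLM (𝕜 := ℝ) B x‖ := by
  set b := hB.eigenvectorBasis with hb
  set c := fun i => b.repr x i with hc
  have hTx : (Matrix.toEuclideanCLM (𝕜 := ℝ) B) x = Matrix.toEuclideanLin B x := rfl
  have h1 : ‖Matrix.toEuclideanLin B x‖ = Real.sqrt (∑ i, (hB.eigenvalues i * c i)^2) := by
    rw [← b.repr.norm_map (Matrix.toEuclideanLin B x), EuclideanSpace.norm_eq]
    congr 1
    refine Finset.sum_congr rfl fun i _ => ?_
    rw [eigen_repr hB x i, Real.norm_eq_abs, sq_abs]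
  have h2 : ‖x‖ = Real.sqrt (∑ i, (c i)^2) := by
    rw [← b.repr.norm_map x, EuclideanSpace.norm_eq]
    congr 1
    refine Finset.sum_congr rfl fun i _ => ?_
    rw [Real.norm_eq_abs, sq_abs]
  rw [hTx, h1, h2, ← Real.sqrt_sq h0, ← Real.sqrt_mul (by positivity)]
  apply Real.sqrt_le_sqrt
  rw [Finset.mul_sum]
  refine Finset.sum_le_sum fun i _ => ?_
  have hli := hlb i
  nlinarith [sq_nonneg (c i), mul_nonneg (sub_nonneg.2 hli) (by linarith : (0:ℝ) ≤ hB.eigenvalues i + lam)]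


/-- perturbation bound for matrix inverses (Stewart). -/
theorem inverse_perturbation_bound {n₀ : ℕ} (hn₀ : 0 < n₀)
    (A B : Matrix (Fin n₀) (Fin n₀) ℝ)
    (hA : A.IsSymm) (hB : B.IsSymm) (hBpd : B.PosDef)
    (hAB : opNorm (A - B) ≤ lambdaMin B / 2) :
    IsUnit A ∧
      opNorm (A⁻¹ - B⁻¹) ≤ 2 * (1 + Real.sqrt 5) * opNorm (A - B) / (lambdaMin B) ^ 2 := by
  have hBh : B.IsHermitian := hBpd.1
  obtain ⟨⟨imin, hmin⟩, hlb⟩ := lambdaMin_spec hn₀ hBh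
  set lam := lambdaMin B with hlamdef
  have hlam : 0 < lam := hmin ▸ hBpd.eigenvalues_pos imin
  clear_value lam
  set F := Matrix.toEuclideanCLM (𝕜 := ℝ) (n := Fin n₀) with hF
  have hBlow : ∀ x, lam * ‖x‖ ≤ ‖F B x‖ := norm_lower hBh hlam.le hlb
  have hABn : ‖F (A - B)‖ ≤ lam / 2 := by rw [← opNorm_eq hn₀]; exact hAB
  have hε : (0:ℝ) ≤ ‖F (A - B)‖ := norm_nonneg _
  have hAlow : ∀ x : EuclideanSpace ℝ (Fin n₀), lam / 2 * ‖x‖ ≤ ‖F A x‖ := by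
    intro x
    have he : F A x = F B x + F (A - B) x := by
      rw [map_sub]; simp
    have h1 : ‖F B x‖ - ‖F (A - B) x‖ ≤ ‖F A x‖ := by
      have h3 : ‖F B x‖ ≤ ‖F A x‖ + ‖F (A - B) x‖ := by
        calc ‖F B x‖ = ‖F A x - F (A - B) x‖ := by rw [he]; congr 1; abel
        _ ≤ ‖F A x‖ + ‖F (A - B) x‖ := norm_sub_le _ _
      linarith
    have h2 : ‖F (A - B) x‖ ≤ lam / 2 * ‖x‖ :=
      le_trans ((F (A - B)).le_opNorm x) (mul_le_mul_of_nonneg_right hABn (norm_nonneg x))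
    have h3 := hBlow x
    linarith
  have hdet : A.det ≠ 0 := by
    intro h
    obtain ⟨v, hv, hAv⟩ := Matrix.exists_mulVec_eq_zero_iff.2 h
    set w : EuclideanSpace ℝ (Fin n₀) := (WithLp.equiv 2 (Fin n₀ → ℝ)).symm v with hwdef
    have hw0 : w ≠ 0 := by
      intro hh; apply hv
      simpa [hwdef] using congrArg (WithLp.equiv 2 (Fin n₀ → ℝ)) hh
    have hz : F A w = 0 := by
      rw [hF, hwdef, clm_apply_eq, hAv]; simp
    have := hAlow w
    rw [hz, norm_zero] at this
    have hwpos : 0 < ‖w‖ := norm_pos_iff.2 hw0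
    nlinarith
  have hU : IsUnit A := (Matrix.isUnit_iff_isUnit_det A).2 (isUnit_iff_ne_zero.2 hdet)
  refine ⟨hU, ?_⟩
  have hUdet : IsUnit A.det := isUnit_iff_ne_zero.2 hdet
  have hUBdet : IsUnit B.det := isUnit_iff_ne_zero.2 (ne_of_gt hBpd.det_pos)
  have hAAi : A * A⁻¹ = 1 := Matrix.mul_nonsing_inv A hUdet
  have hAiA : A⁻¹ * A = 1 := Matrix.nonsing_inv_mul A hUdet
  have hBBi : B * B⁻¹ = 1 := Matrix.mul_nonsing_inv B hUBdet
  have hBiB : B⁻¹ * B = 1 := Matrix.nonsing_inv_mul B hUBdet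
  have hAinv : ‖F A⁻¹‖ ≤ 2 / lam := by
    refine (F A⁻¹).opNorm_le_bound (by positivity) fun y => ?_
    set x := F A⁻¹ y with hx
    have hfx : F A x = y := by
      calc F A x = (F A * F A⁻¹) y := rfl
      _ = F (A * A⁻¹) y := by rw [_root_.map_mul]
      _ = y := by rw [hAAi, _root_.map_one]; rfl
    have h1 := hAlow x
    rw [hfx] at h1
    calc ‖x‖ = 2 / lam * (lam / 2 * ‖x‖) := by field_simp
    _ ≤ 2 / lam * ‖y‖ := by
      apply mul_le_mul_of_nonneg_left h1 (by positivity)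
  have hBinv : ‖F B⁻¹‖ ≤ 1 / lam := by
    refine (F B⁻¹).opNorm_le_bound (by positivity) fun y => ?_
    set x := F B⁻¹ y with hx
    have hfx : F B x = y := by
      calc F B x = (F B * F B⁻¹) y := rfl
      _ = F (B * B⁻¹) y := by rw [_root_.map_mul]
      _ = y := by rw [hBBi, _root_.map_one]; rfl
    have h1 := hBlow x
    rw [hfx] at h1
    calc ‖x‖ = 1 / lam * (lam * ‖x‖) := by field_simp
    _ ≤ 1 / lam * ‖y‖ := by
      apply mul_le_mul_of_nonneg_left h1 (by positivity)
  have hid : A⁻¹ - B⁻¹ = A⁻¹ * (B - A) * B⁻¹ := by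
    rw [Matrix.mul_sub, Matrix.sub_mul, Matrix.mul_assoc, hBBi, Matrix.mul_one, hAiA,
      Matrix.one_mul]
  have hBA : ‖F (B - A)‖ = ‖F (A - B)‖ := by rw [← norm_neg, ← map_neg, neg_sub]
  have hnorm : ‖F (A⁻¹ - B⁻¹)‖ ≤ 2 / lam * ‖F (A - B)‖ * (1 / lam) := by
    rw [hid, _root_.map_mul, _root_.map_mul]
    calc ‖F A⁻¹ * F (B - A) * F B⁻¹‖ ≤ ‖F A⁻¹ * F (B - A)‖ * ‖F B⁻¹‖ := norm_mul_le _ _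
    _ ≤ ‖F A⁻¹‖ * ‖F (B - A)‖ * ‖F B⁻¹‖ :=
      mul_le_mul_of_nonneg_right (norm_mul_le _ _) (norm_nonneg _)
    _ ≤ 2 / lam * ‖F (A - B)‖ * (1 / lam) := by
      rw [hBA]
      have := norm_nonneg (F A⁻¹)
      have := norm_nonneg (F B⁻¹)
      apply mul_le_mul (mul_le_mul hAinv le_rfl hε (by positivity)) hBinv (norm_nonneg _)
        (by positivity)
  rw [opNorm_eq hn₀, opNorm_eq hn₀, ← hF]
  have hs5 : (0:ℝ) ≤ Real.sqrt 5 := Real.sqrt_nonneg 5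
  obtain ⟨ε, hεdef⟩ : ∃ ε, ‖F (A - B)‖ = ε := ⟨_, rfl⟩
  obtain ⟨D, hDdef⟩ : ∃ D, ‖F (A⁻¹ - B⁻¹)‖ = D := ⟨_, rfl⟩
  rw [hεdef] at hnorm hε ⊢
  rw [hDdef] at hnorm ⊢
  have h2 : (2:ℝ) * ε ≤ 2 * (1 + Real.sqrt 5) * ε := by
    have h5 := mul_nonneg hs5 hε
    clear * - h5
    nlinarith [h5]
  have h3 : 2 / lam * ε * (1 / lam) = 2 * ε / lam ^ 2 := by ring
  rw [h3] at hnorm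
  exact hnorm.trans ((div_le_div_iff_of_pos_right (pow_pos hlam 2)).2 h2)
end

section
/- Let 0 < p_min < 1, β, L > 0, let f belong to the Hölder class H(β, L) on [p_min, 1], let [a, b] ⊆ [p_min, 1] with a < b, and let l ≥ w(β) be an integer. Then there exists a constant C > 0, depending only on l, L, and β, such that any polynomial q of degree at most l that is an L²-projection of f onto Poly(l) on [a, b] satisfies sup_{p ∈ [a, b]} |q(p) − f(p)| ≤ C·(b − a)^β. -/
open MeasureTheory Matrix Set

section Aux
open Nat Polynomial


lemma iterDeriv_subset {f : ℝ → ℝ} {s t : Set ℝ} {n : ℕ}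
    (hf : ContDiffOn ℝ n f t) (hst : s ⊆ t) (hs : UniqueDiffOn ℝ s) (ht : UniqueDiffOn ℝ t) :
    ∀ k : ℕ, k ≤ n → ∀ x ∈ s, iteratedDerivWithin k f s x = iteratedDerivWithin k f t x := by
  intro k
  induction k with
  | zero => intro _ x hx; simp
  | succ k ih =>
    intro hk x hx
    have hk' : k ≤ n := Nat.le_of_succ_le hk
    have hdiff : DifferentiableOn ℝ (iteratedDerivWithin k f t) t :=
      hf.differentiableOn_iteratedDerivWithin (by exact_mod_cast Nat.lt_of_succ_le hk) ht
    rw [iteratedDerivWithin_succ, iteratedDerivWithin_succ]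
    rw [derivWithin_congr (fun y hy => ih hk' y hy) (ih hk' x hx)]
    exact derivWithin_subset hst (hs x hx) (hdiff x (hst hx))

lemma taylor_bound_aux {f : ℝ → ℝ} {s : Set ℝ} {n : ℕ} {β L a b : ℝ}
    (hs : UniqueDiffOn ℝ s) (hsub : Set.Icc a b ⊆ s) (hab : a < b)
    (hcd : ContDiffOn ℝ n f s)
    (hH : ∀ p ∈ s, ∀ p' ∈ s,
      |iteratedDerivWithin n f s p - iteratedDerivWithin n f s p'| ≤ L * |p - p'| ^ (β - n))
    (hL : 0 < L) (hnβ : (n : ℝ) < β) :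
    ∀ x ∈ Set.Icc a b, |f x - taylorWithinEval f n s a x| ≤ (L / (n ! : ℝ)) * (b - a) ^ β := by
  have hba : (0:ℝ) < b - a := by linarith
  have hpow_pos : (0:ℝ) < (b - a) ^ β := Real.rpow_pos_of_pos hba β
  have hfac : (0:ℝ) < (n ! : ℝ) := by positivity
  have hM : 0 ≤ L / (n ! : ℝ) * (b - a) ^ β := by positivity
  intro x hx
  have hmema : a ∈ Set.Icc a b := ⟨le_refl a, hab.le⟩
  rcases eq_or_lt_of_le hx.1 with rfl | hax
  · simpa [taylorWithinEval_self] using hM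
  · have hax_ud : UniqueDiffOn ℝ (Set.Icc a x) := uniqueDiffOn_Icc hax
    have hsub' : Set.Icc a x ⊆ s := fun y hy => hsub ⟨hy.1, hy.2.trans hx.2⟩
    have htrans := iterDeriv_subset hcd hsub' hax_ud hs
    have hmemax : a ∈ Set.Icc a x := ⟨le_refl a, hax.le⟩
    have key : |f x - taylorWithinEval f n s a x|
        ≤ L * (b - a) ^ (β - n) * (x - a) ^ n / (n ! : ℝ) := by
      have hTset : taylorWithinEval f n s a x = taylorWithinEval f n (Set.Icc a x) a x := by
        rw [taylor_within_apply, taylor_within_apply]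
        refine Finset.sum_congr rfl fun k hk => ?_
        rw [htrans k (Finset.mem_range_succ_iff.mp hk) a hmemax]
      rw [hTset]
      rcases Nat.eq_zero_or_pos n with hn0 | hnpos
      · subst hn0
        simp only [taylor_within_zero_eval, pow_zero, Nat.factorial_zero, Nat.cast_zero,
          Nat.cast_one, mul_one, div_one, sub_zero]
        have hHd := hH x (hsub hx) a (hsub hmema)
        simp only [iteratedDerivWithin_zero, Nat.cast_zero, sub_zero] at hHd
        refine hHd.trans ?_
        have : |x - a| ^ β ≤ (b - a) ^ β :=
          Real.rpow_le_rpow (abs_nonneg _)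
            (by rw [abs_of_nonneg (by linarith [hx.1])]; linarith [hx.2])
            (by push_cast; linarith)
        nlinarith
      · obtain ⟨m, rfl⟩ := Nat.exists_eq_succ_of_ne_zero hnpos.ne'
        have hcd' : ContDiffOn ℝ m f (Set.Icc a x) :=
          (hcd.mono hsub').of_le (by exact_mod_cast Nat.le_succ m)
        have hdiff : DifferentiableOn ℝ (iteratedDerivWithin m f (Set.Icc a x)) (Set.Ioo a x) :=
          ((hcd.mono hsub').differentiableOn_iteratedDerivWithin
            (by exact_mod_cast Nat.lt_succ_self m) hax_ud).mono Set.Ioo_subset_Icc_self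
        obtain ⟨x', hx', heq⟩ := taylor_mean_remainder_lagrange hax.ne
          (by rwa [Set.uIcc_of_le hax.le]) (by rwa [Set.uIcc_of_le hax.le, Set.uIoo_of_le hax.le])
        rw [Set.uIcc_of_le hax.le] at heq
        rw [Set.uIoo_of_le hax.le] at hx'
        have hxa' : x' ∈ Set.Icc a x := Set.Ioo_subset_Icc_self hx'
        have hDa := htrans (m+1) le_rfl a hmemax
        have hDx' := htrans (m+1) le_rfl x' hxa'
        have hfct : ((m+1:ℝ) * (m ! : ℝ))⁻¹ = (((m+1)! : ℝ))⁻¹ := by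
          rw [Nat.factorial_succ]; push_cast; ring
        have hexp : f x - taylorWithinEval f (m+1) (Set.Icc a x) a x
            = (iteratedDerivWithin (m+1) f s x' - iteratedDerivWithin (m+1) f s a)
              * (x - a) ^ (m+1) / ((m+1)! : ℝ) := by
          rw [taylorWithinEval_succ, smul_eq_mul, hfct, ← hDa, ← hDx', sub_add_eq_sub_sub, heq]
          ring
        rw [hexp, abs_div, abs_mul,
          abs_of_nonneg (pow_nonneg (by linarith [hx.1] : (0:ℝ) ≤ x - a) _),
          abs_of_nonneg hfac.le]
        have hHd := hH x' (hsub' hxa') a (hsub' hmemax)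
        have hrb : |x' - a| ^ (β - ((m+1:ℕ) : ℝ)) ≤ (b - a) ^ (β - ((m+1:ℕ) : ℝ)) :=
          Real.rpow_le_rpow (abs_nonneg _)
            (by rw [abs_of_nonneg (by linarith [hx'.1])]; linarith [hx'.2, hx.2])
            (by linarith [hnβ])
        gcongr
        exact hHd.trans (mul_le_mul_of_nonneg_left hrb hL.le)
    refine key.trans ?_
    have h1 : (x - a) ^ n ≤ (b - a) ^ n :=
      pow_le_pow_left₀ (by linarith [hx.1]) (by linarith [hx.2]) n
    have h2 : (b - a) ^ (β - n) * (b - a) ^ n = (b - a) ^ β := by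
      rw [← Real.rpow_natCast (b - a) n, ← Real.rpow_add hba]; ring_nf
    have hstep : L * (b - a) ^ (β - n) * (x - a) ^ n ≤ L * (b - a) ^ (β - n) * (b - a) ^ n := by
      have : (0:ℝ) ≤ L * (b - a) ^ (β - n) := by positivity
      nlinarith
    calc L * (b - a) ^ (β - n) * (x - a) ^ n / (n ! : ℝ)
        ≤ L * (b - a) ^ (β - n) * (b - a) ^ n / (n ! : ℝ) := by
          gcongr
      _ = L / (n ! : ℝ) * (b - a) ^ β := by rw [mul_assoc, h2]; ring

lemma inv_ineq01 (l : ℕ) :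
    ∃ C : ℝ, 0 < C ∧ ∀ r : Polynomial ℝ, r.natDegree ≤ l → ∀ x ∈ Set.Icc (0:ℝ) 1,
      |r.eval x| ≤ C * Real.sqrt (∫ u in (0:ℝ)..(1:ℝ), (r.eval u)^2) := by
  set P : (Fin (l+1) → ℝ) → ℝ → ℝ := fun c u => ∑ i : Fin (l+1), c i * u ^ (i:ℕ) with hPdef
  set Q : (Fin (l+1) → ℝ) → ℝ := fun c => ∫ u in (0:ℝ)..(1:ℝ), (P c u)^2 with hQdef
  have hPcont : ∀ c, Continuous (P c) := by intro c; unfold P; fun_prop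
  have hQ_eq : ∀ c, Q c = ∑ i : Fin (l+1), ∑ j : Fin (l+1),
      c i * c j * (((i:ℕ) + (j:ℕ) + 1 : ℕ) : ℝ)⁻¹ := by
    intro c
    have hsq : ∀ u : ℝ, (P c u)^2
        = ∑ i : Fin (l+1), ∑ j : Fin (l+1), c i * c j * u ^ ((i:ℕ)+(j:ℕ)) := by
      intro u
      rw [sq]
      unfold P
      rw [Finset.sum_mul_sum]
      refine Finset.sum_congr rfl fun i _ => Finset.sum_congr rfl fun j _ => ?_
      rw [pow_add]; ring
    unfold Q
    simp only [hsq]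
    rw [intervalIntegral.integral_finset_sum (fun i _ => by
      apply Continuous.intervalIntegrable; fun_prop)]
    refine Finset.sum_congr rfl fun i _ => ?_
    rw [intervalIntegral.integral_finset_sum (fun j _ => by
      apply Continuous.intervalIntegrable; fun_prop)]
    refine Finset.sum_congr rfl fun j _ => ?_
    rw [intervalIntegral.integral_const_mul, integral_pow]
    push_cast
    norm_num
  have hQcont : Continuous Q := by
    have : Q = fun c => ∑ i : Fin (l+1), ∑ j : Fin (l+1),
        c i * c j * (((i:ℕ) + (j:ℕ) + 1 : ℕ) : ℝ)⁻¹ := funext hQ_eq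
    rw [this]; fun_prop
  have hQnonneg : ∀ c, 0 ≤ Q c := fun c =>
    intervalIntegral.integral_nonneg (by norm_num) (fun u _ => sq_nonneg _)
  -- positivity of Q on nonzero vectors
  have hQpos : ∀ c, c ≠ 0 → 0 < Q c := by
    intro c hc
    rcases (hQnonneg c).lt_or_eq with h | h
    · exact h
    exfalso
    set r : Polynomial ℝ := ∑ i : Fin (l+1), Polynomial.C (c i) * Polynomial.X ^ (i:ℕ) with hrdef
    have hev : ∀ u, r.eval u = P c u := by
      intro u; unfold r P; rw [Polynomial.eval_finset_sum]; simp
    have hcoeff : ∀ i : Fin (l+1), r.coeff (i:ℕ) = c i := by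
      intro i0
      unfold r
      rw [Polynomial.finset_sum_coeff, Finset.sum_eq_single i0]
      · simp
      · intro j _ hj
        simp only [Polynomial.coeff_C_mul, Polynomial.coeff_X_pow]
        rw [if_neg (fun hh => hj (Fin.val_injective hh.symm))]
        ring
      · intro h; exact absurd (Finset.mem_univ i0) h
    have h0 : ∫ u in Set.Ioc (0:ℝ) 1, (P c u)^2 = 0 := by
      rw [← intervalIntegral.integral_of_le (by norm_num : (0:ℝ) ≤ 1)]
      exact h.symm
    have hint : IntegrableOn (fun u => (P c u)^2) (Set.Ioc (0:ℝ) 1) :=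
      ((hPcont c).pow 2).integrableOn_Ioc
    have hae : (fun u => (P c u)^2) =ᵐ[volume.restrict (Set.Ioc (0:ℝ) 1)] 0 :=
      (integral_eq_zero_iff_of_nonneg (fun u => sq_nonneg _) hint).mp h0
    have h1 : volume ({u : ℝ | ¬ (P c u)^2 = 0} ∩ Set.Ioc (0:ℝ) 1) = 0 := by
      have h2 := MeasureTheory.ae_iff.mp hae
      simp only [Pi.zero_apply] at h2
      rwa [Measure.restrict_apply' measurableSet_Ioc] at h2
    have hZ : Set.Infinite {u : ℝ | r.IsRoot u} := by
      by_contra hfin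
      rw [Set.not_infinite] at hfin
      have hsub2 : Set.Ioc (0:ℝ) 1
          ⊆ ({u : ℝ | ¬ (P c u)^2 = 0} ∩ Set.Ioc (0:ℝ) 1) ∪ {u : ℝ | r.IsRoot u} := by
        intro u hu
        by_cases hPu : P c u = 0
        · right; simp only [Set.mem_setOf_eq, Polynomial.IsRoot, hev u, hPu]
        · left; exact ⟨by simp [pow_eq_zero_iff, hPu], hu⟩
      have hle := (measure_mono (μ := volume) hsub2).trans (measure_union_le _ _)
      rw [h1, hfin.measure_zero volume] at hle
      simp [Real.volume_Ioc] at hle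
    have hr0 : r = 0 := Polynomial.eq_zero_of_infinite_isRoot r hZ
    apply hc
    funext i
    have := hcoeff i
    rw [hr0] at this
    simpa using this.symm
  -- minimum on the sphere
  obtain ⟨c₀, hc₀mem, hc₀min⟩ := (isCompact_sphere (0 : Fin (l+1) → ℝ) 1).exists_isMinOn
    (NormedSpace.sphere_nonempty.mpr one_pos.le) hQcont.continuousOn
  have hc₀norm : ‖c₀‖ = 1 := by rwa [mem_sphere_zero_iff_norm] at hc₀mem
  set m := Q c₀ with hmdef
  have hm : 0 < m := hQpos c₀ (by intro hh; rw [hh] at hc₀norm; simp at hc₀norm)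
  have hhom : ∀ (t : ℝ) (c), Q (t • c) = t^2 * Q c := by
    intro t c
    have hPt : ∀ u, P (t • c) u = t * P c u := by
      intro u; unfold P; rw [Finset.mul_sum]
      refine Finset.sum_congr rfl fun i _ => ?_
      simp [mul_assoc]
    unfold Q
    simp only [hPt]
    rw [← intervalIntegral.integral_const_mul]
    refine intervalIntegral.integral_congr fun u _ => ?_
    ring
  have hlow : ∀ c, m * ‖c‖^2 ≤ Q c := by
    intro c
    rcases eq_or_ne c 0 with rfl | hc
    · have : Q 0 = 0 := by
        have h00 : (0 : Fin (l+1) → ℝ) = (0:ℝ) • (0 : Fin (l+1) → ℝ) := by simp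
        rw [h00, hhom]; ring
      simp [this]
    · have hnc : 0 < ‖c‖ := norm_pos_iff.mpr hc
      have hmem : ‖c‖⁻¹ • c ∈ Metric.sphere (0 : Fin (l+1) → ℝ) 1 := by
        rw [mem_sphere_zero_iff_norm, norm_smul, norm_inv, norm_norm,
          inv_mul_cancel₀ hnc.ne']
      have h1 : m ≤ Q (‖c‖⁻¹ • c) := hc₀min hmem
      have h2 : Q (‖c‖⁻¹ • c) = (‖c‖⁻¹)^2 * Q c := hhom _ _
      rw [h2] at h1
      have h3 : m ≤ (‖c‖⁻¹)^2 * Q c := h1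
      calc m * ‖c‖^2 ≤ ((‖c‖⁻¹)^2 * Q c) * ‖c‖^2 := by nlinarith [sq_nonneg ‖c‖]
        _ = Q c := by field_simp
  -- conclusion
  refine ⟨(l+1) / Real.sqrt m, by positivity, ?_⟩
  intro r hr x hx
  set c : Fin (l+1) → ℝ := fun i => r.coeff i with hcdef
  have hev : ∀ u, r.eval u = P c u := by
    intro u
    rw [Polynomial.eval_eq_sum_range' (Nat.lt_succ_of_le hr)]
    unfold P c
    rw [Finset.sum_range fun i => r.coeff i * u ^ i]
  have hQc : Q c = ∫ u in (0:ℝ)..(1:ℝ), (r.eval u)^2 := by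
    unfold Q
    exact intervalIntegral.integral_congr fun u _ => by rw [hev u]
  have hb1 : |P c x| ≤ (l+1) * ‖c‖ := by
    calc |P c x| ≤ ∑ i : Fin (l+1), |c i * x ^ (i:ℕ)| := Finset.abs_sum_le_sum_abs _ _
      _ ≤ ∑ _i : Fin (l+1), ‖c‖ := by
          refine Finset.sum_le_sum fun i _ => ?_
          rw [abs_mul]
          have h1 : |c i| ≤ ‖c‖ := norm_le_pi_norm c i
          have h2 : |x ^ (i:ℕ)| ≤ 1 := by
            rw [abs_pow]
            exact pow_le_one₀ (abs_nonneg x) (abs_le.mpr ⟨by linarith [hx.1], hx.2⟩)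
          nlinarith [abs_nonneg (c i), abs_nonneg (x ^ (i:ℕ)), norm_nonneg c]
      _ = (l+1) * ‖c‖ := by simp [Finset.sum_const, Finset.card_univ]
  have hb2 : ‖c‖ ≤ Real.sqrt (Q c) / Real.sqrt m := by
    have hs1 : Real.sqrt (m * ‖c‖^2) ≤ Real.sqrt (Q c) := Real.sqrt_le_sqrt (hlow c)
    rw [Real.sqrt_mul hm.le, Real.sqrt_sq (norm_nonneg c)] at hs1
    rw [le_div_iff₀ (Real.sqrt_pos.mpr hm)]
    linarith [hs1]
  calc |Polynomial.eval x r| = |P c x| := by rw [hev x]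
    _ ≤ (l+1) * ‖c‖ := hb1
    _ ≤ (l+1) * (Real.sqrt (Q c) / Real.sqrt m) := by
        have hl1 : (0:ℝ) ≤ (l+1) := by positivity
        nlinarith [hb2, norm_nonneg c]
    _ = (l+1) / Real.sqrt m * Real.sqrt (∫ u in (0:ℝ)..(1:ℝ), (r.eval u)^2) := by
        rw [← hQc]; ring

lemma inv_ineq (l : ℕ) :
    ∃ C : ℝ, 0 < C ∧ ∀ (a b : ℝ), a < b → ∀ r : Polynomial ℝ, r.natDegree ≤ l →
      ∀ p ∈ Set.Icc a b,
        |r.eval p| ≤ C * Real.sqrt ((b - a)⁻¹ * ∫ u in a..b, (r.eval u)^2) := by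
  obtain ⟨C, hC, h⟩ := inv_ineq01 l
  refine ⟨C, hC, ?_⟩
  intro a b hab r hr p hp
  have hba : (0:ℝ) < b - a := by linarith
  set s : Polynomial ℝ := r.comp (Polynomial.C (b - a) * Polynomial.X + Polynomial.C a)
    with hsdef
  have hsdeg : s.natDegree ≤ l := by
    refine (Polynomial.natDegree_comp_le).trans ?_
    calc r.natDegree * (Polynomial.C (b-a) * Polynomial.X + Polynomial.C a).natDegree
        ≤ l * 1 := Nat.mul_le_mul hr Polynomial.natDegree_linear_le
      _ = l := mul_one l
  have hsev : ∀ t : ℝ, s.eval t = r.eval ((b-a)*t + a) := by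
    intro t; rw [hsdef, Polynomial.eval_comp]; simp
  set t := (p - a) / (b - a) with htdef
  have ht : t ∈ Set.Icc (0:ℝ) 1 :=
    ⟨div_nonneg (by linarith [hp.1]) hba.le, (div_le_one hba).mpr (by linarith [hp.2])⟩
  have hpt : (b - a) * t + a = p := by rw [htdef]; field_simp; ring
  have hIeq : (∫ u in (0:ℝ)..(1:ℝ), (s.eval u)^2)
      = (b-a)⁻¹ * ∫ u in a..b, (r.eval u)^2 := by
    have hcv := intervalIntegral.integral_comp_mul_add (a := (0:ℝ)) (b := (1:ℝ))
      (fun u => (r.eval u)^2) hba.ne' a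
    simp only [mul_zero, zero_add, mul_one, sub_add_cancel, smul_eq_mul] at hcv
    calc (∫ u in (0:ℝ)..(1:ℝ), (s.eval u)^2)
        = ∫ u in (0:ℝ)..(1:ℝ), (r.eval ((b-a)*u + a))^2 :=
          intervalIntegral.integral_congr fun u _ => by rw [hsev u]
      _ = (b-a)⁻¹ * ∫ u in a..b, (r.eval u)^2 := hcv
  have hfin := h s hsdeg t ht
  rw [hsev t, hpt, hIeq] at hfin
  exact hfin

end Aux

/-- uniform approximation bound for the L²-projection of a Hölder smooth
function onto polynomials of degree at most `l ≥ w(β)` over a subinterval `[a, b]`. -/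
theorem l2_projection_sup_error (β L : ℝ) (hβ : 0 < β) (hL : 0 < L)
    (l : ℕ) (hl : holderW β ≤ l) :
    ∃ C : ℝ, 0 < C ∧
      ∀ (p_min a b : ℝ), 0 < p_min → p_min < 1 → p_min ≤ a → a < b → b ≤ 1 →
      ∀ f : ℝ → ℝ, HolderClass β L f (Set.Icc p_min 1) →
      ∀ q : Polynomial ℝ, IsL2Proj l f (Set.Icc a b) q →
      ∀ p ∈ Set.Icc a b, |q.eval p - f p| ≤ C * (b - a) ^ β := by
  classical
  obtain ⟨CA, hCA, hinv⟩ := inv_ineq l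
  set n := holderW β with hndef
  have hfac : (0:ℝ) < (n.factorial : ℝ) := by positivity
  refine ⟨(2*CA + 1) * (L / (n.factorial : ℝ)), by positivity, ?_⟩
  intro p_min a b hpmin hpmin1 hpa hab hb1 f hf q hq p hp
  have hba : (0:ℝ) < b - a := by linarith
  have h0 : HolderClass0 β L f (Set.Icc p_min 1) := by
    unfold HolderClass at hf
    split_ifs at hf with h
    · exact hf.1
    · exact hf
  have hs_ud : UniqueDiffOn ℝ (Set.Icc p_min 1) := uniqueDiffOn_Icc (by linarith)
  have hsub : Set.Icc a b ⊆ Set.Icc p_min 1 := Set.Icc_subset_Icc hpa (by linarith)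
  have hnβ : (n : ℝ) < β := by
    have hc1 : 1 ≤ ⌈β⌉₊ := Nat.one_le_ceil_iff.mpr hβ
    have he : (n:ℝ) = (⌈β⌉₊ : ℝ) - 1 := by
      rw [hndef]; unfold holderW; rw [Nat.cast_sub hc1]; norm_num
    have h2 : (⌈β⌉₊ : ℝ) < β + 1 := Nat.ceil_lt_add_one hβ.le
    linarith
  have hTay := taylor_bound_aux hs_ud hsub hab h0.1 h0.2.2 hL hnβ
  set M := L / (n.factorial : ℝ) * (b - a) ^ β with hMdef
  have hM0 : 0 < M := by
    have := Real.rpow_pos_of_pos hba β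
    positivity
  -- the Taylor polynomial as a `Polynomial ℝ`
  set T : Polynomial ℝ := ∑ k ∈ Finset.range (n+1),
    Polynomial.C (iteratedDerivWithin k f (Set.Icc p_min 1) a / (k.factorial : ℝ))
      * (Polynomial.X - Polynomial.C a) ^ k with hTdef
  have hTdeg : T.natDegree ≤ l := by
    refine Polynomial.natDegree_sum_le_of_forall_le _ _ fun k hk => ?_
    refine (Polynomial.natDegree_C_mul_le _ _).trans ?_
    rw [Polynomial.natDegree_pow, Polynomial.natDegree_X_sub_C, mul_one]
    exact le_trans (Finset.mem_range_succ_iff.mp hk) hl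
  have hTeval : ∀ x : ℝ, T.eval x = taylorWithinEval f n (Set.Icc p_min 1) a x := by
    intro x
    rw [taylor_within_apply, hTdef, Polynomial.eval_finset_sum]
    refine Finset.sum_congr rfl fun k _ => ?_
    simp only [Polynomial.eval_mul, Polynomial.eval_C, Polynomial.eval_pow,
      Polynomial.eval_sub, Polynomial.eval_X, smul_eq_mul]
    ring
  have hTb : ∀ x ∈ Set.Icc a b, |f x - T.eval x| ≤ M := fun x hx => by
    rw [hTeval x]; exact hTay x hx
  -- continuity and integrability
  have hfc : ContinuousOn f (Set.Icc a b) := (h0.1.continuousOn).mono hsub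
  have hc1 : ContinuousOn (fun u => (f u - T.eval u)^2) (Set.Icc a b) :=
    (hfc.sub (Polynomial.continuous_aeval T).continuousOn).pow 2
  have hc2 : ContinuousOn (fun u => (f u - q.eval u)^2) (Set.Icc a b) :=
    (hfc.sub (Polynomial.continuous_aeval q).continuousOn).pow 2
  have hc3 : ContinuousOn (fun u => (q.eval u - T.eval u)^2) (Set.Icc a b) :=
    (((Polynomial.continuous_aeval q).continuousOn).sub
      (Polynomial.continuous_aeval T).continuousOn).pow 2
  have hi1 : IntegrableOn (fun u => (f u - T.eval u)^2) (Set.Ioc a b) :=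
    (hc1.integrableOn_Icc).mono_set Set.Ioc_subset_Icc_self
  have hi2 : IntegrableOn (fun u => (f u - q.eval u)^2) (Set.Ioc a b) :=
    (hc2.integrableOn_Icc).mono_set Set.Ioc_subset_Icc_self
  have hi3 : IntegrableOn (fun u => (q.eval u - T.eval u)^2) (Set.Ioc a b) :=
    (hc3.integrableOn_Icc).mono_set Set.Ioc_subset_Icc_self
  have hI1 : (∫ u in Set.Ioc a b, (f u - T.eval u)^2) ≤ (b-a) * M^2 := by
    have hcst : (∫ _u in Set.Ioc a b, M^2) = (b-a) * M^2 := by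
      rw [setIntegral_const, Real.volume_real_Ioc_of_le hab.le, smul_eq_mul]
    rw [← hcst]
    refine setIntegral_mono_on hi1
      (integrableOn_const measure_Ioc_lt_top.ne) measurableSet_Ioc ?_
    intro u hu
    have hb := hTb u (Set.Ioc_subset_Icc_self hu)
    calc (f u - T.eval u)^2 = |f u - T.eval u|^2 := (sq_abs _).symm
      _ ≤ M^2 := by nlinarith [abs_nonneg (f u - T.eval u)]
  have hproj : (∫ u in Set.Ioc a b, (f u - q.eval u)^2)
      ≤ ∫ u in Set.Ioc a b, (f u - T.eval u)^2 := by
    have := hq.2 T hTdeg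
    rwa [integral_Icc_eq_integral_Ioc, integral_Icc_eq_integral_Ioc] at this
  have hI3 : (∫ u in Set.Ioc a b, (q.eval u - T.eval u)^2) ≤ 4 * ((b-a) * M^2) := by
    have hptw : ∀ u ∈ Set.Ioc a b,
        (q.eval u - T.eval u)^2 ≤ 2*(f u - q.eval u)^2 + 2*(f u - T.eval u)^2 := by
      intro u _; nlinarith [sq_nonneg (f u - q.eval u + (f u - T.eval u)),
        sq_nonneg (f u - q.eval u - (f u - T.eval u))]
    have hmono := setIntegral_mono_on hi3
      (((hi2.const_mul 2)).add ((hi1.const_mul 2))) measurableSet_Ioc hptw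
    have hsplit : (∫ u in Set.Ioc a b, (2*(f u - q.eval u)^2 + 2*(f u - T.eval u)^2))
        = 2 * (∫ u in Set.Ioc a b, (f u - q.eval u)^2)
          + 2 * (∫ u in Set.Ioc a b, (f u - T.eval u)^2) := by
      have hadd := integral_add (μ := volume.restrict (Set.Ioc a b))
        (hi2.const_mul 2) (hi1.const_mul 2)
      simpa [integral_const_mul] using hadd
    have hmono' : (∫ u in Set.Ioc a b, (q.eval u - T.eval u)^2)
        ≤ ∫ u in Set.Ioc a b, (2*(f u - q.eval u)^2 + 2*(f u - T.eval u)^2) := by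
      simpa using hmono
    rw [hsplit] at hmono'
    linarith
  -- inverse inequality
  have hdeg : (q - T).natDegree ≤ l := (Polynomial.natDegree_sub_le q T).trans
    (max_le hq.1 hTdeg)
  have happ := hinv a b hab (q - T) hdeg p hp
  have hiv : (∫ u in a..b, ((q - T).eval u)^2)
      = ∫ u in Set.Ioc a b, (q.eval u - T.eval u)^2 := by
    rw [intervalIntegral.integral_of_le hab.le]
    refine setIntegral_congr_fun measurableSet_Ioc fun u _ => by
      simp [Polynomial.eval_sub]
  rw [hiv] at happ
  have hIQ : 0 ≤ ∫ u in Set.Ioc a b, (q.eval u - T.eval u)^2 :=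
    setIntegral_nonneg measurableSet_Ioc fun u _ => sq_nonneg _
  have harg : (b-a)⁻¹ * (∫ u in Set.Ioc a b, (q.eval u - T.eval u)^2) ≤ (2*M)^2 := by
    have h1 : (b-a)⁻¹ * (∫ u in Set.Ioc a b, (q.eval u - T.eval u)^2)
        ≤ (b-a)⁻¹ * (4 * ((b-a) * M^2)) := by
      apply mul_le_mul_of_nonneg_left hI3 (by positivity)
    have h2 : (b-a)⁻¹ * (4 * ((b-a) * M^2)) = (2*M)^2 := by
      field_simp; ring
    linarith
  have hsq : Real.sqrt ((b-a)⁻¹ * ∫ u in Set.Ioc a b, (q.eval u - T.eval u)^2) ≤ 2*M := by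
    have := Real.sqrt_le_sqrt harg
    rwa [Real.sqrt_sq (by positivity : (0:ℝ) ≤ 2*M)] at this
  have hqT : |(q - T).eval p| ≤ CA * (2*M) :=
    happ.trans (mul_le_mul_of_nonneg_left hsq hCA.le)
  have hTp : |T.eval p - f p| ≤ M := by rw [abs_sub_comm]; exact hTb p hp
  have hqTp : |q.eval p - T.eval p| ≤ CA * (2*M) := by
    rwa [Polynomial.eval_sub] at hqT
  calc |q.eval p - f p| = |(q.eval p - T.eval p) + (T.eval p - f p)| := by ring_nf
    _ ≤ |q.eval p - T.eval p| + |T.eval p - f p| := abs_add_le _ _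
    _ ≤ CA * (2*M) + M := add_le_add hqTp hTp
    _ = (2*CA + 1) * (L / (n.factorial : ℝ)) * (b - a) ^ β := by rw [hMdef]; ring
end

section
/- Fix integers k ≥ 0 and t ≥ 1 and a real Δ ≥ 0. Let φ_1, …, φ_t, θ* ∈ ℝ^{k+1} and let ξ_1, …, ξ_t, β_1, …, β_t be real numbers with |β_i| ≤ Δ for every i. Set d_i = ⟨φ_i, θ*⟩ + ξ_i + β_i, Λ = I_{k+1} + Σ_{i=1}^t φ_i·φ_iᵀ, and θ̂ = Λ⁻¹·Σ_{i=1}^t φ_i·d_i. Then √((θ̂ − θ*)ᵀΛ(θ̂ − θ*)) ≤ ‖θ*‖₂ + Δ·√t + sup_{z ∈ ℝ^{k+1} : zᵀΛz ≤ 1} |Σ_{i=1}^t ξ_i·⟨φ_i, z⟩|. -/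
open Matrix

/-- The regularized design matrix `Λ = I + ∑ i φ_i φ_iᵀ`. -/
noncomputable def lamMat (k t : ℕ) (φ : Fin t → Fin (k + 1) → ℝ) :
    Matrix (Fin (k + 1)) (Fin (k + 1)) ℝ :=
  1 + ∑ i, vecMulVec (φ i) (φ i)

section helpers
variable {k t : ℕ} (φ : Fin t → Fin (k + 1) → ℝ)

lemma sum_smul_dotProduct (c : Fin t → ℝ) (z : Fin (k + 1) → ℝ) :
    (∑ i, c i • φ i) ⬝ᵥ z = ∑ i, c i * (φ i ⬝ᵥ z) := by
  simp [dotProduct, Finset.sum_apply, Finset.sum_mul, Finset.mul_sum, mul_assoc]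
  rw [Finset.sum_comm]

lemma lam_mulVec (x : Fin (k + 1) → ℝ) :
    (lamMat k t φ) *ᵥ x = x + ∑ i, (φ i ⬝ᵥ x) • φ i := by
  funext j
  simp only [lamMat, add_mulVec, one_mulVec, Pi.add_apply, Finset.sum_apply,
    Pi.smul_apply, smul_eq_mul]
  congr 1
  simp only [mulVec, dotProduct, Matrix.sum_apply, vecMulVec_apply, Finset.sum_mul]
  rw [Finset.sum_comm]
  exact Finset.sum_congr rfl fun i _ => Finset.sum_congr rfl fun j' _ => by ring

lemma lam_quad (x : Fin (k + 1) → ℝ) :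
    x ⬝ᵥ (lamMat k t φ) *ᵥ x = x ⬝ᵥ x + ∑ i, (φ i ⬝ᵥ x) ^ 2 := by
  rw [lam_mulVec, dotProduct_add]
  congr 1
  simp only [dotProduct, Finset.sum_apply, Pi.smul_apply, smul_eq_mul, Finset.mul_sum]
  rw [Finset.sum_comm]
  refine Finset.sum_congr rfl fun i _ => ?_
  rw [sq, Finset.sum_mul]
  exact Finset.sum_congr rfl fun j _ => by ring

lemma lam_posDef : (lamMat k t φ).PosDef := by
  rw [posDef_iff_dotProduct_mulVec]
  constructor
  · show (lamMat k t φ)ᴴ = _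
    unfold lamMat
    rw [conjTranspose_add, conjTranspose_sum]
    congr 1
    · simp
    · refine Finset.sum_congr rfl fun i _ => ?_
      ext a b
      simp [vecMulVec_apply, mul_comm]
  · intro x hx
    rw [star_trivial, lam_quad]
    have h1 : 0 < x ⬝ᵥ x := by
      obtain ⟨j, hj⟩ := Function.ne_iff.mp hx
      have hj' : x j ≠ 0 := by simpa using hj
      have h0 : (0:ℝ) < x j ^ 2 := by positivity
      have h2 : x j ^ 2 ≤ ∑ j', x j' ^ 2 :=
        Finset.single_le_sum (f := fun j' => x j' ^ 2) (fun i _ => sq_nonneg _)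
          (Finset.mem_univ j)
      have : x ⬝ᵥ x = ∑ j', x j' ^ 2 := by simp [dotProduct, sq]
      linarith
    have h2 : (0:ℝ) ≤ ∑ i, (φ i ⬝ᵥ x) ^ 2 := Finset.sum_nonneg fun i _ => sq_nonneg _
    linarith

end helpers

lemma abs_dot_le {n : ℕ} (a b : Fin n → ℝ) :
    |a ⬝ᵥ b| ≤ Real.sqrt (∑ j, a j ^ 2) * Real.sqrt (∑ j, b j ^ 2) := by
  rw [← Real.sqrt_mul (Finset.sum_nonneg fun _ _ => sq_nonneg _), ← Real.sqrt_sq_eq_abs]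
  apply Real.sqrt_le_sqrt
  simpa [dotProduct] using Finset.sum_mul_sq_le_sq_mul_sq Finset.univ a b

lemma dot_self_eq_sum_sq {n : ℕ} (a : Fin n → ℝ) : a ⬝ᵥ a = ∑ j, a j ^ 2 := by
  simp [dotProduct, sq]


/-- basic error decomposition for the ridge estimator
`θ̂ = Λ⁻¹ ∑ i d_i φ_i` with `d_i = ⟨φ_i, θ*⟩ + ξ_i + β_i`. -/
theorem ridge_estimator_error_decomposition (k t : ℕ) (ht : 1 ≤ t)
    (Δ : ℝ) (hΔ : 0 ≤ Δ)
    (φ : Fin t → Fin (k + 1) → ℝ) (θstar : Fin (k + 1) → ℝ)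
    (ξ βv : Fin t → ℝ) (hβv : ∀ i, |βv i| ≤ Δ) :
    Real.sqrt
        (((lamMat k t φ)⁻¹.mulVec (∑ i, (φ i ⬝ᵥ θstar + ξ i + βv i) • φ i) - θstar) ⬝ᵥ
          (lamMat k t φ).mulVec
            ((lamMat k t φ)⁻¹.mulVec (∑ i, (φ i ⬝ᵥ θstar + ξ i + βv i) • φ i) - θstar)) ≤
      Real.sqrt (∑ j, θstar j ^ 2) + Δ * Real.sqrt t +
        sSup {y : ℝ | ∃ z : Fin (k + 1) → ℝ,
          z ⬝ᵥ (lamMat k t φ).mulVec z ≤ 1 ∧ y = |∑ i, ξ i * (φ i ⬝ᵥ z)|} := by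
  have hpd := lam_posDef φ
  set Λ := lamMat k t φ with hΛdef
  set w : Fin (k + 1) → ℝ := ∑ i, (φ i ⬝ᵥ θstar + ξ i + βv i) • φ i with hw
  set e : Fin (k + 1) → ℝ := Λ⁻¹.mulVec w - θstar with he
  set S := sSup {y : ℝ | ∃ z : Fin (k + 1) → ℝ,
      z ⬝ᵥ Λ.mulVec z ≤ 1 ∧ y = |∑ i, ξ i * (φ i ⬝ᵥ z)|} with hS
  set Q := e ⬝ᵥ Λ.mulVec e with hQdef
  -- basic facts
  have hinv : Λ *ᵥ (Λ⁻¹ *ᵥ w) = w := by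
    rw [Matrix.mulVec_mulVec, Matrix.mul_nonsing_inv _ hpd.det_pos.ne'.isUnit,
      Matrix.one_mulVec]
  have hΛe : Λ *ᵥ e = (∑ i, ξ i • φ i) + (∑ i, βv i • φ i) - θstar := by
    rw [he, Matrix.mulVec_sub, hinv, lam_mulVec, hw]
    simp only [add_smul, Finset.sum_add_distrib]
    abel
  have hQ : Q = (∑ i, ξ i * (φ i ⬝ᵥ e)) + (∑ i, βv i * (φ i ⬝ᵥ e)) - θstar ⬝ᵥ e := by
    rw [hQdef]
    show e ⬝ᵥ Λ *ᵥ e = _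
    rw [hΛe, dotProduct_sub, dotProduct_add,
      dotProduct_comm e (∑ i, ξ i • φ i), dotProduct_comm e (∑ i, βv i • φ i),
      dotProduct_comm e θstar, sum_smul_dotProduct, sum_smul_dotProduct]
  have hquad : Q = e ⬝ᵥ e + ∑ i, (φ i ⬝ᵥ e) ^ 2 := lam_quad φ e
  have hQ0 : 0 ≤ Q := by
    rw [hquad, dot_self_eq_sum_sq]
    positivity
  set s := Real.sqrt Q with hsdef
  have hs0 : 0 ≤ s := Real.sqrt_nonneg _
  have hs2 : s ^ 2 = Q := Real.sq_sqrt hQ0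
  have hee : e ⬝ᵥ e ≤ Q := by
    rw [hquad]; have : (0:ℝ) ≤ ∑ i, (φ i ⬝ᵥ e) ^ 2 := by positivity
    linarith
  have hPP : ∑ i, (φ i ⬝ᵥ e) ^ 2 ≤ Q := by
    rw [hquad, dot_self_eq_sum_sq]
    have : (0:ℝ) ≤ ∑ j, e j ^ 2 := by positivity
    linarith
  have hsqrt_ee : Real.sqrt (∑ j, e j ^ 2) ≤ s := by
    apply Real.sqrt_le_sqrt; rw [← dot_self_eq_sum_sq]; exact hee
  -- θstar bound
  have hθ : |θstar ⬝ᵥ e| ≤ Real.sqrt (∑ j, θstar j ^ 2) * s := by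
    refine (abs_dot_le θstar e).trans ?_
    exact mul_le_mul_of_nonneg_left hsqrt_ee (Real.sqrt_nonneg _)
  -- β bound
  have hβ : |∑ i, βv i * (φ i ⬝ᵥ e)| ≤ Δ * Real.sqrt t * s := by
    calc |∑ i, βv i * (φ i ⬝ᵥ e)| ≤ ∑ i, |βv i * (φ i ⬝ᵥ e)| :=
          Finset.abs_sum_le_sum_abs _ _
      _ = ∑ i, |βv i| * |φ i ⬝ᵥ e| := by simp [abs_mul]
      _ ≤ ∑ i, Δ * |φ i ⬝ᵥ e| :=
          Finset.sum_le_sum fun i _ => mul_le_mul_of_nonneg_right (hβv i) (abs_nonneg _)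
      _ = Δ * ∑ i, |φ i ⬝ᵥ e| := by rw [Finset.mul_sum]
      _ ≤ Δ * (Real.sqrt t * s) := ?_
      _ = Δ * Real.sqrt t * s := by ring
    refine mul_le_mul_of_nonneg_left ?_ hΔ
    have h1 : (∑ i, |φ i ⬝ᵥ e|) ^ 2 ≤ (t : ℝ) * ∑ i, (φ i ⬝ᵥ e) ^ 2 := by
      simpa [sq_abs] using
        sq_sum_le_card_mul_sum_sq (s := Finset.univ) (f := fun i => |φ i ⬝ᵥ e|)
    have h2 : (∑ i, |φ i ⬝ᵥ e|) ^ 2 ≤ (t : ℝ) * Q := by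
      refine h1.trans (mul_le_mul_of_nonneg_left hPP (by positivity))
    have h3 : 0 ≤ ∑ i, |φ i ⬝ᵥ e| := Finset.sum_nonneg fun _ _ => abs_nonneg _
    calc ∑ i, |φ i ⬝ᵥ e| = Real.sqrt ((∑ i, |φ i ⬝ᵥ e|) ^ 2) := (Real.sqrt_sq h3).symm
      _ ≤ Real.sqrt ((t : ℝ) * Q) := Real.sqrt_le_sqrt h2
      _ = Real.sqrt t * s := by rw [Real.sqrt_mul (by positivity)]
  -- the sup set
  have hbdd : BddAbove {y : ℝ | ∃ z : Fin (k + 1) → ℝ,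
      z ⬝ᵥ Λ.mulVec z ≤ 1 ∧ y = |∑ i, ξ i * (φ i ⬝ᵥ z)|} := by
    refine ⟨Real.sqrt (∑ j, (∑ i, ξ i • φ i) j ^ 2), fun y hy => ?_⟩
    obtain ⟨z, hz, rfl⟩ := hy
    have hz1 : z ⬝ᵥ z ≤ 1 := by
      have := lam_quad φ z
      have h2 : (0:ℝ) ≤ ∑ i, (φ i ⬝ᵥ z) ^ 2 := by positivity
      have : z ⬝ᵥ z + ∑ i, (φ i ⬝ᵥ z) ^ 2 ≤ 1 := by rw [← lam_quad φ z]; exact hz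
      linarith
    rw [← sum_smul_dotProduct φ ξ z]
    refine (abs_dot_le _ z).trans ?_
    have : Real.sqrt (∑ j, z j ^ 2) ≤ 1 := by
      rw [show (1:ℝ) = Real.sqrt 1 by simp]
      apply Real.sqrt_le_sqrt
      rw [← dot_self_eq_sum_sq]; exact hz1
    calc Real.sqrt (∑ j, (∑ i, ξ i • φ i) j ^ 2) * Real.sqrt (∑ j, z j ^ 2)
        ≤ Real.sqrt (∑ j, (∑ i, ξ i • φ i) j ^ 2) * 1 :=
          mul_le_mul_of_nonneg_left this (Real.sqrt_nonneg _)
      _ = _ := by ring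
  have hS0 : 0 ≤ S := by
    rw [hS]
    refine le_csSup hbdd ⟨0, ?_, by simp⟩
    simp [Matrix.mulVec_zero]
  -- ξ bound
  have hξ : |∑ i, ξ i * (φ i ⬝ᵥ e)| ≤ s * S := by
    rcases hs0.eq_or_lt with h0 | hpos
    · have hQzero : Q = 0 := by rw [← hs2, ← h0]; ring
      have he0 : e = 0 := by
        by_contra h
        have := hpd.dotProduct_mulVec_pos h
        rw [star_trivial] at this
        rw [hQdef] at hQzero
        exact absurd hQzero (ne_of_gt this)
      simp [he0, ← h0]
    · set z := s⁻¹ • e with hzdef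
      have hφz : ∀ i, φ i ⬝ᵥ z = s⁻¹ * (φ i ⬝ᵥ e) := fun i => by
        rw [hzdef, dotProduct_smul]; rfl
      have hzΛ : z ⬝ᵥ Λ.mulVec z ≤ 1 := by
        have : z ⬝ᵥ Λ.mulVec z = s⁻¹ * (s⁻¹ * Q) := by
          rw [hzdef, Matrix.mulVec_smul, dotProduct_smul, smul_dotProduct, hQdef]
          simp [smul_eq_mul, mul_assoc]
        rw [this, ← hs2]
        rw [show s⁻¹ * (s⁻¹ * s ^ 2) = 1 by field_simp]
      have hmem : |∑ i, ξ i * (φ i ⬝ᵥ z)| ∈ {y : ℝ | ∃ z : Fin (k + 1) → ℝ,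
          z ⬝ᵥ Λ.mulVec z ≤ 1 ∧ y = |∑ i, ξ i * (φ i ⬝ᵥ z)|} := ⟨z, hzΛ, rfl⟩
      have hle : |∑ i, ξ i * (φ i ⬝ᵥ z)| ≤ S := le_csSup hbdd hmem
      have heq : |∑ i, ξ i * (φ i ⬝ᵥ z)| = s⁻¹ * |∑ i, ξ i * (φ i ⬝ᵥ e)| := by
        simp only [hφz]
        have hsum : ∑ i, ξ i * (s⁻¹ * (φ i ⬝ᵥ e)) = s⁻¹ * ∑ i, ξ i * (φ i ⬝ᵥ e) := by
          rw [Finset.mul_sum]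
          exact Finset.sum_congr rfl fun i _ => by ring
        rw [hsum, abs_mul, abs_of_pos (inv_pos.mpr hpos)]
      rw [heq] at hle
      calc |∑ i, ξ i * (φ i ⬝ᵥ e)| = s * (s⁻¹ * |∑ i, ξ i * (φ i ⬝ᵥ e)|) := by
            field_simp
        _ ≤ s * S := mul_le_mul_of_nonneg_left hle hs0
  -- combine
  have key : Q ≤ s * (Real.sqrt (∑ j, θstar j ^ 2) + Δ * Real.sqrt t + S) := by
    have h1 : ∑ i, ξ i * (φ i ⬝ᵥ e) ≤ s * S := (le_abs_self _).trans hξ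
    have h2 : ∑ i, βv i * (φ i ⬝ᵥ e) ≤ Δ * Real.sqrt t * s := (le_abs_self _).trans hβ
    have h3 : -(θstar ⬝ᵥ e) ≤ Real.sqrt (∑ j, θstar j ^ 2) * s := (neg_le_abs _).trans hθ
    have hring : s * (Real.sqrt (∑ j, θstar j ^ 2) + Δ * Real.sqrt t + S) =
        Real.sqrt (∑ j, θstar j ^ 2) * s + Δ * Real.sqrt t * s + s * S := by ring
    rw [hQ, hring]
    linarith
  show s ≤ _
  rcases hs0.eq_or_lt with h0 | hpos
  · rw [← h0]
    have hA : 0 ≤ Δ * Real.sqrt t := by positivity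
    have hB : 0 ≤ Real.sqrt (∑ j, θstar j ^ 2) := Real.sqrt_nonneg _
    linarith
  · refine le_of_mul_le_mul_left ?_ hpos
    calc s * s = s ^ 2 := (sq s).symm
      _ = Q := hs2
      _ ≤ s * (Real.sqrt (∑ j, θstar j ^ 2) + Δ * Real.sqrt t + S) := key
end

section
/- Let β ∈ (0, 1) and C₁ > 0. Let f : [0, 1] → ℝ be continuously differentiable with |f'(x)| ≤ C₁ for all x ∈ [0, 1], let c₀ ∈ ℝ with |c₀| ≥ C₁, and define h(x) = c₀·x^β + f(x). Then there exist M₁ ≥ 0 and M₂ > 0, depending only on β and C₁, such that for every integer c > M₁: max_{0 ≤ i ≤ 2^c − 1} sup_{p ∈ V_i} |h(p) − 2^c·∫_{V_i} h(u) du| ≥ M₂·2^{−cβ}, where V_i = [i/2^c, (i+1)/2^c]. In other words, h is self-similar on [0, 1] with parameters (β, l = 0, M₁, M₂). -/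
open MeasureTheory Set

/-- functions of the form `h(x) = c₀ x^β + f(x)` with `|c₀| ≥ C₁ ≥ sup |f'|`
are self-similar on `[0, 1]` with parameters `(β, l = 0, M₁, M₂)`: on some dyadic level-`c`
subinterval, the distance of `h` to its average (its degree-`0` L²-projection) is at least
`M₂ · 2^{−cβ}`. -/
theorem rough_plus_smooth_is_selfsimilar (β C₁ : ℝ)
    (hβ0 : 0 < β) (hβ1 : β < 1) (hC₁ : 0 < C₁) :
    ∃ M₁ M₂ : ℝ, 0 ≤ M₁ ∧ 0 < M₂ ∧
      ∀ f : ℝ → ℝ, ContDiffOn ℝ 1 f (Set.Icc 0 1) →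
      (∀ x ∈ Set.Icc (0:ℝ) 1, |derivWithin f (Set.Icc 0 1) x| ≤ C₁) →
      ∀ c₀ : ℝ, C₁ ≤ |c₀| →
      ∀ c : ℕ, M₁ < (c : ℝ) →
        ∃ i : ℕ, i < 2 ^ c ∧
          ∃ x ∈ Set.Icc ((i : ℝ) / 2 ^ c) (((i : ℝ) + 1) / 2 ^ c),
            M₂ * (2 : ℝ) ^ (-(c : ℝ) * β) ≤
              |(c₀ * x ^ β + f x) -
                2 ^ c * ∫ u in Set.Icc ((i : ℝ) / 2 ^ c) (((i : ℝ) + 1) / 2 ^ c),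
                  (c₀ * u ^ β + f u)| := by
  have h1β : (0:ℝ) < 1 - β := by linarith
  refine ⟨1 / (1 - β), C₁ / 4, div_nonneg zero_le_one h1β.le, by positivity, ?_⟩
  intro f hf hf' c₀ hc₀ c hc
  refine ⟨0, by positivity, ?_⟩
  set b : ℝ := 1 / 2 ^ c with hbdef
  have hb0 : (0:ℝ) < b := by positivity
  have hb1 : b ≤ 1 := by
    rw [hbdef, div_le_one (by positivity)]
    exact one_le_pow₀ one_le_two
  have hb : b = (2:ℝ) ^ (-(c:ℝ)) := by
    rw [Real.rpow_neg (by norm_num), Real.rpow_natCast, hbdef, one_div]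
  have hbβ : b ^ β = (2:ℝ) ^ (-(c:ℝ) * β) := by
    rw [hb, ← Real.rpow_mul (by norm_num)]
  have hbβpos : 0 < b ^ β := Real.rpow_pos_of_pos hb0 _
  -- b ≤ b^β / 2
  have hc' : 1 ≤ (c:ℝ) * (1 - β) := by
    rw [div_lt_iff₀ h1β] at hc
    linarith
  have hhalf : b ^ (1 - β) ≤ 1 / 2 := by
    rw [hb, ← Real.rpow_mul (by norm_num)]
    calc (2:ℝ) ^ (-(c:ℝ) * (1 - β)) ≤ (2:ℝ) ^ (-1:ℝ) := by
          apply Real.rpow_le_rpow_of_exponent_le one_le_two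
          nlinarith
      _ = 1 / 2 := by rw [Real.rpow_neg_one]; norm_num
  have hble : b ≤ b ^ β * (1 / 2) := by
    calc b = b ^ β * b ^ (1 - β) := by rw [← Real.rpow_add hb0]; norm_num
      _ ≤ b ^ β * (1 / 2) := mul_le_mul_of_nonneg_left hhalf hbβpos.le
  -- mean value bound on f
  have hmvt : |f b - f 0| ≤ C₁ * b := by
    have hdiff : DifferentiableOn ℝ f (Set.Icc 0 1) :=
      hf.differentiableOn one_ne_zero
    have := (convex_Icc (0:ℝ) 1).norm_image_sub_le_of_norm_derivWithin_le hdiff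
      (fun x hx => by rw [Real.norm_eq_abs]; exact hf' x hx)
      (Set.left_mem_Icc.2 zero_le_one) (Set.mem_Icc.2 ⟨hb0.le, hb1⟩)
    simpa [Real.norm_eq_abs, abs_of_pos hb0] using this
  -- key difference bound
  have hzero : c₀ * (0:ℝ) ^ β + f 0 = f 0 := by
    rw [Real.zero_rpow hβ0.ne']; ring
  have hdiffbig : C₁ / 2 * b ^ β ≤ |(c₀ * b ^ β + f b) - (c₀ * (0:ℝ) ^ β + f 0)| := by
    rw [hzero]
    have h1 : C₁ * b ^ β ≤ |c₀ * b ^ β| := by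
      rw [abs_mul, abs_of_pos hbβpos]
      exact mul_le_mul_of_nonneg_right hc₀ hbβpos.le
    have h2 : |c₀ * b ^ β| ≤ |c₀ * b ^ β + f b - f 0| + |f b - f 0| := by
      have h4 := abs_add_le (c₀ * b ^ β + f b - f 0) (f 0 - f b)
      have heq : c₀ * b ^ β + f b - f 0 + (f 0 - f b) = c₀ * b ^ β := by ring
      rw [heq, abs_sub_comm (f 0)] at h4
      exact h4
    have h3 : C₁ * b ≤ C₁ * (b ^ β * (1 / 2)) :=
      mul_le_mul_of_nonneg_left hble hC₁.le
    linarith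
  -- simplify the interval endpoints in the goal
  have h0cast : ((0:ℕ):ℝ) / 2 ^ c = 0 := by norm_num
  have h1cast : (((0:ℕ):ℝ) + 1) / 2 ^ c = b := by rw [hbdef]; norm_num
  rw [h0cast, h1cast]
  set a : ℝ := 2 ^ c * ∫ u in Set.Icc (0:ℝ) b, (c₀ * u ^ β + f u) with ha
  by_cases hcase : C₁ / 4 * (2:ℝ) ^ (-(c:ℝ) * β) ≤ |(c₀ * (0:ℝ) ^ β + f 0) - a|
  · exact ⟨0, Set.mem_Icc.2 ⟨le_rfl, hb0.le⟩, hcase⟩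
  · refine ⟨b, Set.mem_Icc.2 ⟨hb0.le, le_rfl⟩, ?_⟩
    push_neg at hcase
    have tri : |(c₀ * b ^ β + f b) - (c₀ * (0:ℝ) ^ β + f 0)| ≤
        |(c₀ * b ^ β + f b) - a| + |(c₀ * (0:ℝ) ^ β + f 0) - a| := by
      have := abs_sub_le (c₀ * b ^ β + f b) a (c₀ * (0:ℝ) ^ β + f 0)
      rw [abs_sub_comm a] at this
      exact this
    rw [← hbβ]
    rw [← hbβ] at hcase
    linarith
end
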